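/- arXiv:2512.19973 — 8 statements merged into one kernel-verified Lean document; each statement's English description precedes it below -/
import Mathlib

section
/- Let G be a finite simple connected graph, S ⊆ V(G) with |S| ≥ 2, and let T₁,…,T_k be k ≥ 2 S-Steiner trees in G. Then T₁,…,T_k are completely independent S-Steiner trees if and only if they are pairwise edge-disjoint and for every vertex w ∈ V(G) there is at most one index i with degree of w in T_i greater than 1. -/
open SimpleGraph

/-- A walk of `G` lies inside the subgraph `T` if all of its edges are edges of `T`. -/
def SimpleGraph.Subgraph.walkIn {V : Type*} {G : SimpleGraph V} (T : G.Subgraph)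
    {u v : V} (P : G.Walk u v) : Prop :=
  ∀ e ∈ P.edges, e ∈ T.edgeSet

/-- `T` is an `S`-Steiner tree of `G`: a subtree of `G` containing all of `S`
all of whose leaves (vertices without two distinct neighbours) lie in `S`. -/
def SimpleGraph.IsSteinerTree {V : Type*} (G : SimpleGraph V) (S : Set V)
    (T : G.Subgraph) : Prop :=
  T.coe.IsTree ∧ S ⊆ T.verts ∧
    ∀ v ∈ T.verts, ¬ (∃ a b, a ≠ b ∧ T.Adj v a ∧ T.Adj v b) → v ∈ S

/-- A family of subgraphs of `G` is completely independent (w.r.t. the terminal set `S`)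
if the members are pairwise edge-disjoint, their vertex sets pairwise intersect exactly
in `S`, and for any two vertices of `S`, paths connecting them inside two distinct members
are internally disjoint. -/
def SimpleGraph.CompletelyIndependent {V : Type*} (G : SimpleGraph V) (S : Set V)
    {ι : Type*} (Ts : ι → G.Subgraph) : Prop :=
  ∀ p q, p ≠ q →
    (Ts p).edgeSet ∩ (Ts q).edgeSet = ∅ ∧
    (Ts p).verts ∩ (Ts q).verts = S ∧
    ∀ x₁ ∈ S, ∀ x₂ ∈ S, x₁ ≠ x₂ →
      ∀ P Q : G.Walk x₁ x₂, P.IsPath → Q.IsPath →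
        (Ts p).walkIn P → (Ts q).walkIn Q →
        ∀ v ∈ P.support, v ∈ Q.support → v = x₁ ∨ v = x₂

/-- A family of subgraphs of `G` is internally disjoint (w.r.t. the terminal set `S`)
if the members are pairwise edge-disjoint and their vertex sets pairwise intersect
exactly in `S`. -/
def SimpleGraph.InternallyDisjoint {V : Type*} (G : SimpleGraph V) (S : Set V)
    {ι : Type*} (Ts : ι → G.Subgraph) : Prop :=
  ∀ p q, p ≠ q →
    (Ts p).edgeSet ∩ (Ts q).edgeSet = ∅ ∧ (Ts p).verts ∩ (Ts q).verts = S

/-- `κ*_G(S)`: the maximum number of pairwise completely independent `S`-Steiner trees. -/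
noncomputable def SimpleGraph.cisstPacking {V : Type*} (G : SimpleGraph V) (S : Set V) : ℕ :=
  sSup {k | ∃ Ts : Fin k → G.Subgraph,
    (∀ i, G.IsSteinerTree S (Ts i)) ∧ G.CompletelyIndependent S Ts}

/-- `κ_G(S)`: the maximum number of pairwise internally disjoint `S`-Steiner trees. -/
noncomputable def SimpleGraph.idstPacking {V : Type*} (G : SimpleGraph V) (S : Set V) : ℕ :=
  sSup {k | ∃ Ts : Fin k → G.Subgraph,
    (∀ i, G.IsSteinerTree S (Ts i)) ∧ G.InternallyDisjoint S Ts}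

/-- The generalized `k*`-connectivity `κ*_k(G)`. -/
noncomputable def SimpleGraph.genConnStar {V : Type*} (G : SimpleGraph V) (k : ℕ) : ℕ :=
  sInf (G.cisstPacking '' {S : Set V | S.ncard = k})

/-- The generalized `k`-connectivity `κ_k(G)`. -/
noncomputable def SimpleGraph.genConnK {V : Type*} (G : SimpleGraph V) (k : ℕ) : ℕ :=
  sInf (G.idstPacking '' {S : Set V | S.ncard = k})

lemma aux_second {W : Type*} {H : SimpleGraph W} {u b v x : W} (h' : H.Adj u b)
    (q : H.Walk b v) (hp : (Walk.cons h' q).IsPath)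
    (he : s(u,x) ∈ (Walk.cons h' q).edges) : x = b := by
  rw [Walk.edges_cons, List.mem_cons] at he
  rcases he with he | he
  · rw [Sym2.eq_iff] at he
    rcases he with ⟨-, rfl⟩ | ⟨rfl, rfl⟩
    · rfl
    · exact absurd rfl h'.ne
  · have hns : u ∉ q.support := ((Walk.cons_isPath_iff h' q).mp hp).2
    exact absurd (Walk.fst_mem_support_of_mem_edges q he) hns

lemma aux_unique_nbr {W : Type*} {H : SimpleGraph W} {u v z z' : W} (Q : H.Walk u v)
    (hQ : Q.IsPath) (h1 : s(u,z) ∈ Q.edges) (h2 : s(u,z') ∈ Q.edges) : z = z' := by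
  cases Q with
  | nil => simp at h1
  | cons h' q => rw [aux_second h' q hQ h1, aux_second h' q hQ h2]

lemma aux_leafward {W : Type*} [Fintype W] {H : SimpleGraph W} (hac : H.IsAcyclic)
    {w a : W} (h : H.Adj w a) :
    ∃ (y : W) (P : H.Walk a y), P.IsPath ∧ w ∉ P.support ∧
      ¬ ∃ c d, c ≠ d ∧ H.Adj y c ∧ H.Adj y d := by
  classical
  set Ns : Set ℕ :=
    {n | ∃ (y : W) (P : H.Walk a y), P.IsPath ∧ w ∉ P.support ∧ P.length = n} with hNs
  have h0 : (0 : ℕ) ∈ Ns := ⟨a, Walk.nil, by simp, by simp [h.ne], rfl⟩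
  have hbdd : BddAbove Ns := by
    refine ⟨Fintype.card W, ?_⟩
    rintro n ⟨y, P, hP, -, hlen⟩
    exact hlen ▸ hP.length_lt.le
  obtain ⟨y, P, hP, hwP, hlen⟩ := Nat.sSup_mem ⟨0, h0⟩ hbdd
  refine ⟨y, P, hP, hwP, ?_⟩
  rintro ⟨c, d, hcd, hyc, hyd⟩
  have hyw : y ≠ w := fun hyw => hwP (hyw ▸ P.end_mem_support)
  have hmax : ∀ z, H.Adj y z → z ≠ w → z ∈ P.support := by
    intro z hz hzw
    by_contra hzs
    have hmem : P.length + 1 ∈ Ns := by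
      refine ⟨z, (Walk.cons hz.symm P.reverse).reverse, ?_, ?_, by simp⟩
      · rw [Walk.isPath_reverse_iff, Walk.cons_isPath_iff]
        exact ⟨hP.reverse, by simpa [Walk.support_reverse] using hzs⟩
      · simp only [Walk.support_reverse, Walk.support_cons, List.mem_reverse, List.mem_cons]
        push_neg
        exact ⟨fun hwz => hzw hwz.symm,
          fun hws => hwP (by simpa [Walk.support_reverse] using hws)⟩
    have := le_csSup hbdd hmem
    omega
  have hedge : ∀ z (hz : H.Adj y z) (hzs : z ∈ P.support), s(y,z) ∈ P.edges := by
    intro z hz hzs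
    by_contra hze
    have hdz : (P.dropUntil z hzs).IsPath := hP.dropUntil hzs
    have hcyc : (Walk.cons hz (P.dropUntil z hzs)).IsCycle := by
      rw [Walk.cons_isCycle_iff]
      exact ⟨hdz, fun hmem => hze (Walk.edges_dropUntil_subset _ hzs hmem)⟩
    exact hac _ hcyc
  have core : H.Adj y w → ∀ c', c' ≠ w → H.Adj y c' → False := by
    intro hyw' c' hcw hyc'
    have hce : s(y, c') ∈ P.edges := hedge c' hyc' (hmax c' hyc' hcw)
    have hay : a ≠ y := by
      rintro rfl
      rw [Walk.isPath_iff_eq_nil] at hP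
      subst hP
      simp at hce
    have hpath : (Walk.cons h P).IsPath := (Walk.cons_isPath_iff h P).mpr ⟨hP, hwP⟩
    have hcyc : (Walk.cons hyw' (Walk.cons h P)).IsCycle := by
      rw [Walk.cons_isCycle_iff]
      refine ⟨hpath, ?_⟩
      rw [Walk.edges_cons, List.mem_cons]
      push_neg
      constructor
      · intro heq
        rw [Sym2.eq_iff] at heq
        rcases heq with ⟨hy, -⟩ | ⟨hya, -⟩
        · exact hyw hy
        · exact hay hya.symm
      · intro hmem
        exact hwP (Walk.snd_mem_support_of_mem_edges P hmem)
    exact hac _ hcyc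
  by_cases hcw : c = w
  · exact core (hcw ▸ hyc) d (fun hdw => hcd (hcw.trans hdw.symm)) hyd
  by_cases hdw : d = w
  · exact core (hdw ▸ hyd) c hcw hyc
  · have h1 : s(y,c) ∈ P.reverse.edges := by
      rw [Walk.edges_reverse, List.mem_reverse]; exact hedge c hyc (hmax c hyc hcw)
    have h2 : s(y,d) ∈ P.reverse.edges := by
      rw [Walk.edges_reverse, List.mem_reverse]; exact hedge d hyd (hmax d hyd hdw)
    exact hcd (aux_unique_nbr P.reverse hP.reverse h1 h2)

-- internal vertex of a path has two distinct neighbours in any subgraph containing the path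
lemma aux_internal {V : Type*} {G : SimpleGraph V} {T : G.Subgraph} :
    ∀ {x₁ x₂ : V} (P : G.Walk x₁ x₂), P.IsPath → T.walkIn P →
      ∀ v ∈ P.support, v ≠ x₁ → v ≠ x₂ →
      ∃ a b, a ≠ b ∧ T.Adj v a ∧ T.Adj v b := by
  intro x₁ x₂ P
  induction P with
  | nil => intro _ _ v hv h1 _; simp at hv; exact absurd hv h1
  | @cons u u' x₂ h Q ih =>
    intro hp hw v hv h1 h2
    rw [Walk.support_cons, List.mem_cons] at hv
    rcases hv with rfl | hv
    · exact absurd rfl h1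
    by_cases hvu : v = u'
    · subst hvu
      cases Q with
      | nil => exact absurd rfl h2
      | @cons _ z _ h' Q' =>
        have hns : u ∉ (Walk.cons h' Q').support := ((Walk.cons_isPath_iff h _).mp hp).2
        refine ⟨u, z, ?_, ?_, ?_⟩
        · rintro rfl
          exact hns (by simp [Walk.support_cons])
        · have h1 : s(u, v) ∈ T.edgeSet := hw _ (by simp [Walk.edges_cons])
          exact (Subgraph.mem_edgeSet.mp h1).symm
        · have h1 : s(v, z) ∈ T.edgeSet := hw _ (by simp [Walk.edges_cons])
          exact Subgraph.mem_edgeSet.mp h1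
    · exact ih (hp.of_cons) (fun e he => hw e (by simp [Walk.edges_cons, he]))
        v hv hvu h2

lemma aux_mem_of_two {W : Type*} {H : SimpleGraph W} (hac : H.IsAcyclic)
    {w a b : W} (ha : H.Adj w a) (hb : H.Adj w b) (hab : a ≠ b) (R : H.Walk a b) :
    w ∈ R.support := by
  classical
  by_contra hws
  have hw1 : w ∉ R.bypass.support := fun hmem => hws (R.support_bypass_subset hmem)
  have hP2 : (Walk.cons ha.symm (Walk.cons hb Walk.nil)).IsPath := by
    simp [Walk.isPath_def, ha.ne', hb.ne, hab]
  have hEq := hac.path_unique ⟨R.bypass, R.bypass_isPath⟩ ⟨_, hP2⟩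
  apply hw1
  rw [show R.bypass = Walk.cons ha.symm (Walk.cons hb Walk.nil) from congrArg Subtype.val hEq]
  simp

lemma aux_steiner_sep {V : Type*} [Fintype V] {G : SimpleGraph V} {S : Set V} {T : G.Subgraph}
    (h1 : T.coe.IsTree)
    (h3 : ∀ v ∈ T.verts, ¬(∃ a b, a ≠ b ∧ T.Adj v a ∧ T.Adj v b) → v ∈ S)
    {w a b : V} (hwa : T.Adj w a) (hwb : T.Adj w b) (hab : a ≠ b) :
    ∃ (y₁ y₂ : T.verts), ↑y₁ ∈ S ∧ ↑y₂ ∈ S ∧ (y₁ : V) ≠ w ∧ (y₂ : V) ≠ w ∧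
      ∀ (R : T.coe.Walk y₁ y₂), (⟨w, hwa.fst_mem⟩ : T.verts) ∈ R.support := by
  classical
  haveI : Fintype T.verts := T.verts.toFinite.fintype
  obtain ⟨y₁, P₁, hP₁, hw₁, hleaf₁⟩ := aux_leafward h1.IsAcyclic hwa.coe
  obtain ⟨y₂, P₂, hP₂, hw₂, hleaf₂⟩ := aux_leafward h1.IsAcyclic hwb.coe
  have hy₁S : (y₁ : V) ∈ S := by
    refine h3 _ y₁.2 ?_
    rintro ⟨c, d, hcd, hc, hd⟩
    exact hleaf₁ ⟨⟨c, hc.snd_mem⟩, ⟨d, hd.snd_mem⟩, fun hEq => hcd (congrArg Subtype.val hEq),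
      hc.coe, hd.coe⟩
  have hy₂S : (y₂ : V) ∈ S := by
    refine h3 _ y₂.2 ?_
    rintro ⟨c, d, hcd, hc, hd⟩
    exact hleaf₂ ⟨⟨c, hc.snd_mem⟩, ⟨d, hd.snd_mem⟩, fun hEq => hcd (congrArg Subtype.val hEq),
      hc.coe, hd.coe⟩
  have hy₁w : (y₁ : V) ≠ w := by
    intro hEq
    apply hw₁
    have hsub : (⟨w, hwa.fst_mem⟩ : T.verts) = y₁ := Subtype.ext hEq.symm
    rw [hsub]
    exact P₁.end_mem_support
  have hy₂w : (y₂ : V) ≠ w := by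
    intro hEq
    apply hw₂
    have hsub : (⟨w, hwb.fst_mem⟩ : T.verts) = y₂ := Subtype.ext hEq.symm
    rw [hsub]
    exact P₂.end_mem_support
  refine ⟨y₁, y₂, hy₁S, hy₂S, hy₁w, hy₂w, ?_⟩
  intro R
  by_contra hws
  have hmem := aux_mem_of_two h1.IsAcyclic hwa.coe hwb.coe
    (fun hEq => hab (congrArg Subtype.val hEq)) (P₁.append (R.append P₂.reverse))
  rw [Walk.mem_support_append_iff, Walk.mem_support_append_iff] at hmem
  rcases hmem with h | h | h
  · exact hw₁ h
  · exact hws h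
  · rw [Walk.support_reverse, List.mem_reverse] at h
    exact hw₂ h

lemma aux_path_through {V : Type*} {G : SimpleGraph V} {T : G.Subgraph}
    (hconn : T.coe.Connected) {w : V} (hw : w ∈ T.verts) {u v : T.verts}
    (hsep : ∀ R : T.coe.Walk u v, (⟨w, hw⟩ : T.verts) ∈ R.support) :
    ∃ P : G.Walk u v, P.IsPath ∧ T.walkIn P ∧ w ∈ P.support := by
  classical
  obtain ⟨R0⟩ := hconn.preconnected u v
  refine ⟨R0.bypass.map T.hom,
    Walk.map_isPath_of_injective Subgraph.hom_injective R0.bypass_isPath, ?_, ?_⟩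
  · intro e he
    change e ∈ (R0.bypass.map T.hom).edges at he
    rw [Walk.edges_map] at he
    obtain ⟨e', he', rfl⟩ := List.mem_map.mp he
    have hes := R0.bypass.edges_subset_edgeSet he'
    revert hes
    refine Sym2.ind (fun x y hxy => ?_) e'
    rw [SimpleGraph.mem_edgeSet] at hxy
    rw [Sym2.map_pair_eq]
    exact Subgraph.mem_edgeSet.mpr hxy
  · change w ∈ (R0.bypass.map T.hom).support
    rw [Walk.support_map]
    exact List.mem_map.mpr ⟨_, hsep R0.bypass, rfl⟩

lemma aux_pair {α : Type*} (r s : α → α → Prop)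
    (rtrans : ∀ {x y z}, r x y → r y z → r x z)
    (ssymm : ∀ {x y}, s x y → s y x) (strans : ∀ {x y z}, s x y → s y z → s x z)
    {y₁ y₂ z₁ z₂ : α} (hr : ¬ r y₁ y₂) (hs : ¬ s z₁ z₂) :
    ∃ u v, (u = y₁ ∨ u = y₂ ∨ u = z₁ ∨ u = z₂) ∧ (v = y₁ ∨ v = y₂ ∨ v = z₁ ∨ v = z₂) ∧
      ¬ r u v ∧ ¬ s u v := by
  by_cases h1 : s y₁ z₁
  · have h2 : ¬ s y₁ z₂ := fun h => hs (strans (ssymm h1) h)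
    by_cases h3 : r y₁ z₂
    · have h4 : ¬ r z₂ y₂ := fun h => hr (rtrans h3 h)
      by_cases h5 : s z₂ y₂
      · exact ⟨y₁, y₂, .inl rfl, .inr (.inl rfl), hr, fun h => h2 (strans h (ssymm h5))⟩
      · exact ⟨z₂, y₂, .inr (.inr (.inr rfl)), .inr (.inl rfl), h4, h5⟩
    · exact ⟨y₁, z₂, .inl rfl, .inr (.inr (.inr rfl)), h3, h2⟩
  · by_cases h3 : r y₁ z₁
    · have h4 : ¬ r z₁ y₂ := fun h => hr (rtrans h3 h)
      by_cases h5 : s z₁ y₂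
      · exact ⟨y₁, y₂, .inl rfl, .inr (.inl rfl), hr, fun h => h1 (strans h (ssymm h5))⟩
      · exact ⟨z₁, y₂, .inr (.inr (.inl rfl)), .inr (.inl rfl), h4, h5⟩
    · exact ⟨y₁, z₁, .inl rfl, .inr (.inr (.inl rfl)), h3, h1⟩

theorem stmt_0 {V : Type*} [Fintype V] (G : SimpleGraph V) (hG : G.Connected)
    (S : Set V) (hS : 2 ≤ S.ncard) (k : ℕ) (hk : 2 ≤ k)
    (Ts : Fin k → G.Subgraph) (hT : ∀ i, G.IsSteinerTree S (Ts i)) :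
    G.CompletelyIndependent S Ts ↔
      ((∀ p q, p ≠ q → (Ts p).edgeSet ∩ (Ts q).edgeSet = ∅) ∧
        ∀ w : V, ∀ p q : Fin k, p ≠ q →
          (∃ a b, a ≠ b ∧ (Ts p).Adj w a ∧ (Ts p).Adj w b) →
          ¬ (∃ a b, a ≠ b ∧ (Ts q).Adj w a ∧ (Ts q).Adj w b)) := by
  constructor
  · intro hCI
    refine ⟨fun p q hpq => (hCI p q hpq).1, ?_⟩
    rintro w p q hpq ⟨a₁, b₁, hab₁, h1a, h1b⟩ ⟨a₂, b₂, hab₂, h2a, h2b⟩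
    have hwp : w ∈ (Ts p).verts := h1a.fst_mem
    have hwq : w ∈ (Ts q).verts := h2a.fst_mem
    obtain ⟨y₁, y₂, hy₁S, hy₂S, hy₁w, hy₂w, hsep₁⟩ :=
      aux_steiner_sep (hT p).1 (hT p).2.2 h1a h1b hab₁
    obtain ⟨z₁, z₂, hz₁S, hz₂S, hz₁w, hz₂w, hsep₂⟩ :=
      aux_steiner_sep (hT q).1 (hT q).2.2 h2a h2b hab₂
    set r : V → V → Prop := fun x y => ∃ (hx : x ∈ (Ts p).verts) (hy : y ∈ (Ts p).verts)
      (R : (Ts p).coe.Walk ⟨x, hx⟩ ⟨y, hy⟩), (⟨w, hwp⟩ : (Ts p).verts) ∉ R.support with hrdef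
    set s : V → V → Prop := fun x y => ∃ (hx : x ∈ (Ts q).verts) (hy : y ∈ (Ts q).verts)
      (R : (Ts q).coe.Walk ⟨x, hx⟩ ⟨y, hy⟩), (⟨w, hwq⟩ : (Ts q).verts) ∉ R.support with hsdef
    have rtrans : ∀ {x y z}, r x y → r y z → r x z := by
      rintro x y z ⟨hx, hy, R1, h1⟩ ⟨hy', hz, R2, h2⟩
      refine ⟨hx, hz, R1.append R2, ?_⟩
      rw [Walk.mem_support_append_iff]
      rintro (h | h)
      · exact h1 h
      · exact h2 h
    have ssymm : ∀ {x y}, s x y → s y x := by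
      rintro x y ⟨hx, hy, R, hR⟩
      refine ⟨hy, hx, R.reverse, ?_⟩
      rwa [Walk.support_reverse, List.mem_reverse]
    have strans : ∀ {x y z}, s x y → s y z → s x z := by
      rintro x y z ⟨hx, hy, R1, h1⟩ ⟨hy', hz, R2, h2⟩
      refine ⟨hx, hz, R1.append R2, ?_⟩
      rw [Walk.mem_support_append_iff]
      rintro (h | h)
      · exact h1 h
      · exact h2 h
    have hr : ¬ r ↑y₁ ↑y₂ := by
      rintro ⟨hx, hy, R, hR⟩
      exact hR (hsep₁ R)
    have hs : ¬ s ↑z₁ ↑z₂ := by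
      rintro ⟨hx, hy, R, hR⟩
      exact hR (hsep₂ R)
    obtain ⟨u, v, hu4, hv4, hru, hsu⟩ := aux_pair r s rtrans ssymm strans hr hs
    have huS : u ∈ S := by rcases hu4 with rfl | rfl | rfl | rfl <;> assumption
    have hvS : v ∈ S := by rcases hv4 with rfl | rfl | rfl | rfl <;> assumption
    have huw : u ≠ w := by rcases hu4 with rfl | rfl | rfl | rfl <;> assumption
    have hvw : v ≠ w := by rcases hv4 with rfl | rfl | rfl | rfl <;> assumption
    have hup : u ∈ (Ts p).verts := (hT p).2.1 huS
    have hvp : v ∈ (Ts p).verts := (hT p).2.1 hvS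
    have huq : u ∈ (Ts q).verts := (hT q).2.1 huS
    have hvq : v ∈ (Ts q).verts := (hT q).2.1 hvS
    have huv : u ≠ v := by
      rintro rfl
      refine hru ⟨hup, hup, Walk.nil, ?_⟩
      simp only [Walk.support_nil, List.mem_singleton, Subtype.mk.injEq]
      exact fun h => huw h.symm
    have hsepP : ∀ R : (Ts p).coe.Walk ⟨u, hup⟩ ⟨v, hvp⟩,
        (⟨w, hwp⟩ : (Ts p).verts) ∈ R.support := by
      intro R
      by_contra hws
      exact hru ⟨hup, hvp, R, hws⟩
    have hsepQ : ∀ R : (Ts q).coe.Walk ⟨u, huq⟩ ⟨v, hvq⟩,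
        (⟨w, hwq⟩ : (Ts q).verts) ∈ R.support := by
      intro R
      by_contra hws
      exact hsu ⟨huq, hvq, R, hws⟩
    obtain ⟨PP, hPPp, hPPin, hPPw⟩ := aux_path_through (hT p).1.isConnected hwp hsepP
    obtain ⟨QQ, hQQp, hQQin, hQQw⟩ := aux_path_through (hT q).1.isConnected hwq hsepQ
    rcases (hCI p q hpq).2.2 u huS v hvS huv PP QQ hPPp hQQp hPPin hQQin w hPPw hQQw with h | h
    · exact huw h.symm
    · exact hvw h.symm
  · rintro ⟨hE, hD⟩ p q hpq
    refine ⟨hE p q hpq, ?_, ?_⟩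
    · apply Set.eq_of_subset_of_subset
      · rintro v ⟨hvp, hvq⟩
        by_contra hvS
        have h2p : ∃ a b, a ≠ b ∧ (Ts p).Adj v a ∧ (Ts p).Adj v b := by
          by_contra hno
          exact hvS ((hT p).2.2 v hvp hno)
        have h2q : ∃ a b, a ≠ b ∧ (Ts q).Adj v a ∧ (Ts q).Adj v b := by
          by_contra hno
          exact hvS ((hT q).2.2 v hvq hno)
        exact hD v p q hpq h2p h2q
      · intro v hv
        exact ⟨(hT p).2.1 hv, (hT q).2.1 hv⟩
    · intro x₁ hx₁ x₂ hx₂ hne P Q hP hQ hPin hQin v hvP hvQ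
      by_contra hcon
      push_neg at hcon
      exact hD v p q hpq
        (aux_internal P hP hPin v hvP hcon.1 hcon.2)
        (aux_internal Q hQ hQin v hvQ hcon.1 hcon.2)
end

section
/- Let G be a finite simple connected graph and 2 ≤ k ≤ l ≤ |V(G)|. Then κ*_k(G) ≥ κ*_l(G). -/
open SimpleGraph

namespace CISTAux

open SimpleGraph Walk

variable {V : Type*} {G : SimpleGraph V}

section TreePath

variable {W : Type*} {H : SimpleGraph W}

noncomputable def tp (hH : H.IsTree) (a b : W) : H.Walk a b :=
  (hH.existsUnique_path a b).exists.choose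

lemma tp_isPath (hH : H.IsTree) (a b : W) : (tp hH a b).IsPath :=
  (hH.existsUnique_path a b).exists.choose_spec

lemma tp_eq (hH : H.IsTree) {a b : W} (p : H.Walk a b) (hp : p.IsPath) : p = tp hH a b := by
  obtain ⟨q, hq, hu⟩ := hH.existsUnique_path a b
  rw [hu p hp, hu (tp hH a b) (tp_isPath hH a b)]

lemma tp_self (hH : H.IsTree) (a : W) : tp hH a a = Walk.nil :=
  (tp_eq hH Walk.nil IsPath.nil).symm

lemma tp_symm (hH : H.IsTree) (a b : W) : tp hH b a = (tp hH a b).reverse :=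
  (tp_eq hH (tp hH a b).reverse (tp_isPath hH a b).reverse).symm

lemma tp_support_subset (hH : H.IsTree) (a b c : W) :
    ∀ v ∈ (tp hH a b).support, v ∈ (tp hH a c).support ∨ v ∈ (tp hH c b).support := by
  classical
  intro v hv
  have h := tp_eq hH (((tp hH a c).append (tp hH c b)).bypass) (Walk.bypass_isPath _)
  rw [← h] at hv
  have h2 := Walk.support_bypass_subset _ hv
  rwa [Walk.mem_support_append_iff] at h2

end TreePath

section Internal

/-- An internal vertex of a path has two distinct neighbours in the path's subgraph. -/
lemma internal_two_neighbors {u w v : V} {p : G.Walk u w} (hp : p.IsPath) (hv : v ∈ p.support)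
    (hu : v ≠ u) (hw : v ≠ w) :
    ∃ x y, x ≠ y ∧ p.toSubgraph.Adj v x ∧ p.toSubgraph.Adj v y := by
  classical
  have hspec : (p.takeUntil v hv).append (p.dropUntil v hv) = p := p.take_spec hv
  set q1 := p.takeUntil v hv with hq1
  set q2 := p.dropUntil v hv with hq2
  obtain ⟨x2, h2, r2, hq2'⟩ := q2.exists_eq_cons_of_ne hw
  obtain ⟨x1, h1, r1, hq1'⟩ := q1.reverse.exists_eq_cons_of_ne hu
  have he2 : s(v, x2) ∈ q2.edges := by rw [hq2']; simp
  have he1 : s(v, x1) ∈ q1.edges := by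
    have : s(v, x1) ∈ q1.reverse.edges := by rw [hq1']; simp
    rwa [Walk.edges_reverse, List.mem_reverse] at this
  have hx1 : x1 ∈ q1.support := by
    have : x1 ∈ q1.reverse.support := by
      rw [hq1']
      simp [Walk.support_cons]
    rwa [Walk.support_reverse, List.mem_reverse] at this
  have hx2 : x2 ∈ q2.support.tail := by
    rw [hq2']
    simp [Walk.support_cons]
  have hnd : (q1.support ++ q2.support.tail).Nodup := by
    rw [← Walk.support_append, hspec]
    exact hp.support_nodup
  have hne : x1 ≠ x2 := by
    have hdisj := (List.nodup_append'.mp hnd).2.2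
    intro hxy
    exact hdisj hx1 (hxy ▸ hx2)
  have hmem1 : s(v, x1) ∈ p.edges := by
    rw [← hspec, Walk.edges_append, List.mem_append]; exact Or.inl he1
  have hmem2 : s(v, x2) ∈ p.edges := by
    rw [← hspec, Walk.edges_append, List.mem_append]; exact Or.inr he2
  exact ⟨x1, x2, hne, Subgraph.mem_edgeSet.mp ((p.mem_edges_toSubgraph).mpr hmem1),
    Subgraph.mem_edgeSet.mp ((p.mem_edges_toSubgraph).mpr hmem2)⟩

end Internal

section Prune

variable {T : G.Subgraph}

lemma walk_toSubgraph_le {x y : T.verts} (p : T.coe.Walk x y) : (p.map T.hom).toSubgraph ≤ T := by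
  induction p with
  | nil =>
    simpa using (SimpleGraph.singletonSubgraph_le_iff _ _).2 (Subtype.mem _)
  | cons h q ih =>
    refine sup_le ?_ ih
    exact SimpleGraph.subgraphOfAdj_le_of_adj T h

noncomputable def wk (hT : T.coe.IsTree) {S : Set V} (hS : S ⊆ T.verts) {s₀ : V} (hs₀ : s₀ ∈ S)
    (a : S) : G.Walk s₀ a :=
  (tp hT ⟨s₀, hS hs₀⟩ ⟨a, hS a.2⟩).map T.hom

lemma wk_isPath (hT : T.coe.IsTree) {S : Set V} (hS : S ⊆ T.verts) {s₀ : V} (hs₀ : s₀ ∈ S)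
    (a : S) : (wk hT hS hs₀ a).IsPath :=
  Walk.map_isPath_of_injective Subgraph.hom_injective (tp_isPath _ _ _)

noncomputable def prune (hT : T.coe.IsTree) {S : Set V} (hS : S ⊆ T.verts) {s₀ : V}
    (hs₀ : s₀ ∈ S) : G.Subgraph :=
  ⨆ a : S, (wk hT hS hs₀ a).toSubgraph

lemma prune_le (hT : T.coe.IsTree) {S : Set V} (hS : S ⊆ T.verts) {s₀ : V} (hs₀ : s₀ ∈ S) :
    prune hT hS hs₀ ≤ T :=
  iSup_le fun _ => walk_toSubgraph_le _

lemma mem_prune_verts (hT : T.coe.IsTree) {S : Set V} (hS : S ⊆ T.verts) {s₀ : V} (hs₀ : s₀ ∈ S)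
    {v : V} : v ∈ (prune hT hS hs₀).verts ↔ ∃ a : S, v ∈ (wk hT hS hs₀ a).support := by
  simp [prune, Subgraph.verts_iSup, Walk.mem_verts_toSubgraph]

lemma subset_prune_verts (hT : T.coe.IsTree) {S : Set V} (hS : S ⊆ T.verts) {s₀ : V}
    (hs₀ : s₀ ∈ S) : S ⊆ (prune hT hS hs₀).verts := by
  intro a ha
  exact (mem_prune_verts hT hS hs₀).mpr ⟨⟨a, ha⟩, Walk.end_mem_support _⟩

lemma prune_connected (hT : T.coe.IsTree) {S : Set V} (hS : S ⊆ T.verts) {s₀ : V}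
    (hs₀ : s₀ ∈ S) : (prune hT hS hs₀).Connected := by
  rw [Subgraph.connected_iff', connected_iff_exists_forall_reachable]
  refine ⟨⟨s₀, (mem_prune_verts hT hS hs₀).mpr ⟨⟨s₀, hs₀⟩, Walk.start_mem_support _⟩⟩, ?_⟩
  rintro ⟨v, hv⟩
  obtain ⟨a, ha⟩ := (mem_prune_verts hT hS hs₀).1 hv
  have h1 := (wk hT hS hs₀ a).toSubgraph_connected ⟨s₀, Walk.start_mem_verts_toSubgraph _⟩
    ⟨v, (Walk.mem_verts_toSubgraph _).2 ha⟩
  exact Reachable.map (Subgraph.inclusion (le_iSup (fun a : S => (wk hT hS hs₀ a).toSubgraph) a)) h1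

lemma prune_isTree (hT : T.coe.IsTree) {S : Set V} (hS : S ⊆ T.verts) {s₀ : V}
    (hs₀ : s₀ ∈ S) : (prune hT hS hs₀).coe.IsTree := by
  refine ⟨(prune_connected hT hS hs₀).coe, ?_⟩
  intro v c hc
  exact hT.2 _ ((Walk.map_isCycle_iff_of_injective
    (Subgraph.inclusion.injective (prune_le hT hS hs₀))).mpr hc)

lemma prune_internal (hT : T.coe.IsTree) {S : Set V} (hS : S ⊆ T.verts) {s₀ : V}
    (hs₀ : s₀ ∈ S) {v : V} (hv : v ∈ (prune hT hS hs₀).verts) (hvS : v ∉ S) :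
    ∃ a b, a ≠ b ∧ (prune hT hS hs₀).Adj v a ∧ (prune hT hS hs₀).Adj v b := by
  obtain ⟨a, ha⟩ := (mem_prune_verts hT hS hs₀).1 hv
  obtain ⟨x, y, hxy, h1, h2⟩ := internal_two_neighbors (wk_isPath hT hS hs₀ a) ha
    (fun h => hvS (h ▸ hs₀)) (fun h => hvS (h ▸ a.2))
  have hle := le_iSup (fun a : S => (wk hT hS hs₀ a).toSubgraph) a
  exact ⟨x, y, hxy, hle.2 h1, hle.2 h2⟩

end Prune

section Sep

def SepG (T : G.Subgraph) (hT : T.coe.IsTree) (w x y : V) : Prop :=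
  ∃ (hx : x ∈ T.verts) (hy : y ∈ T.verts),
    w ∈ ((tp hT ⟨x, hx⟩ ⟨y, hy⟩).map T.hom).support

variable {T : G.Subgraph}

lemma sepG_symm {hT : T.coe.IsTree} {w x y : V} (h : SepG T hT w x y) : SepG T hT w y x := by
  obtain ⟨hx, hy, hw⟩ := h
  refine ⟨hy, hx, ?_⟩
  rw [Walk.support_map, List.mem_map] at hw ⊢
  obtain ⟨w', hw', rfl⟩ := hw
  refine ⟨w', ?_, rfl⟩
  rw [tp_symm, Walk.support_reverse, List.mem_reverse]
  exact hw'

lemma sepG_tripod {hT : T.coe.IsTree} {w a b : V} (h : SepG T hT w a b) {c : V}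
    (hc : c ∈ T.verts) : SepG T hT w a c ∨ SepG T hT w c b := by
  obtain ⟨ha, hb, hw⟩ := h
  rw [Walk.support_map, List.mem_map] at hw
  obtain ⟨w', hw', rfl⟩ := hw
  rcases tp_support_subset hT ⟨a, ha⟩ ⟨b, hb⟩ ⟨c, hc⟩ w' hw' with h | h
  · exact Or.inl ⟨ha, hc, by rw [Walk.support_map, List.mem_map]; exact ⟨w', h, rfl⟩⟩
  · exact Or.inr ⟨hc, hb, by rw [Walk.support_map, List.mem_map]; exact ⟨w', h, rfl⟩⟩

lemma sepG_self {hT : T.coe.IsTree} {w x : V} (h : SepG T hT w x x) : w = x := by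
  obtain ⟨hx, hy, hw⟩ := h
  rw [tp_self] at hw
  simpa using hw

lemma sepG_path {hT : T.coe.IsTree} {w x y : V} (h : SepG T hT w x y) :
    ∃ P : G.Walk x y, P.IsPath ∧ T.walkIn P ∧ w ∈ P.support := by
  obtain ⟨hx, hy, hw⟩ := h
  refine ⟨_, Walk.map_isPath_of_injective Subgraph.hom_injective (tp_isPath _ _ _), ?_, hw⟩
  intro e he
  replace he : e ∈ (Walk.map T.hom (tp hT ⟨x, hx⟩ ⟨y, hy⟩) :
      G.Walk (T.hom ⟨x, hx⟩) (T.hom ⟨y, hy⟩)).edges := he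
  rw [Walk.edges_map, List.mem_map] at he
  obtain ⟨e', he', rfl⟩ := he
  induction e' with
  | _ u' v' =>
    have hadj : T.coe.Adj u' v' := Walk.adj_of_mem_edges _ he'
    exact Subgraph.mem_edgeSet.mpr hadj

end Sep


section Cross

variable {T : G.Subgraph}

lemma sepG_final {Ti Tj : G.Subgraph} {hTi : Ti.coe.IsTree} {hTj : Tj.coe.IsTree}
    {S : Set V} {w : V} (hw : w ∉ S)
    (H : ∀ x₁ ∈ S, ∀ x₂ ∈ S, x₁ ≠ x₂ →
      ∀ P Q : G.Walk x₁ x₂, P.IsPath → Q.IsPath → Ti.walkIn P → Tj.walkIn Q →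
        ∀ v ∈ P.support, v ∈ Q.support → v = x₁ ∨ v = x₂)
    {x y : V} (hx : x ∈ S) (hy : y ∈ S)
    (hix : SepG Ti hTi w x y) (hjx : SepG Tj hTj w x y) : False := by
  have hxy : x ≠ y := by
    rintro rfl
    exact hw (sepG_self hix ▸ hx)
  obtain ⟨P, hP, hPin, hPw⟩ := sepG_path hix
  obtain ⟨Q, hQ, hQin, hQw⟩ := sepG_path hjx
  rcases H x hx y hy hxy P Q hP hQ hPin hQin w hPw hQw with rfl | rfl
  · exact hw hx
  · exact hw hy

lemma no_common {Ti Tj : G.Subgraph} {hTi : Ti.coe.IsTree} {hTj : Tj.coe.IsTree}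
    {S : Set V} (hSi : S ⊆ Ti.verts) (hSj : S ⊆ Tj.verts)
    {w a b c d : V} (ha : a ∈ S) (hb : b ∈ S) (hc : c ∈ S) (hd : d ∈ S) (hw : w ∉ S)
    (hi : SepG Ti hTi w a b) (hj : SepG Tj hTj w c d)
    (H : ∀ x₁ ∈ S, ∀ x₂ ∈ S, x₁ ≠ x₂ →
      ∀ P Q : G.Walk x₁ x₂, P.IsPath → Q.IsPath → Ti.walkIn P → Tj.walkIn Q →
        ∀ v ∈ P.support, v ∈ Q.support → v = x₁ ∨ v = x₂) : False := by
  have step1 : ∃ e ∈ S, SepG Tj hTj w a e := by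
    rcases sepG_tripod hj (hSj ha) with h | h
    · exact ⟨c, hc, sepG_symm h⟩
    · exact ⟨d, hd, h⟩
  obtain ⟨e, he, hje⟩ := step1
  rcases sepG_tripod hi (hSi he) with h | h
  · exact sepG_final hw H ha he h hje
  · rcases sepG_tripod hje (hSj hb) with h' | h'
    · exact sepG_final hw H ha hb hi h'
    · exact sepG_final hw H hb he (sepG_symm h) h'

end Cross

section Family

lemma exists_family {S S' : Set V} (hsub : S ⊆ S') {s₀ : V} (hs₀ : s₀ ∈ S) {r : ℕ}
    (Ts : Fin r → G.Subgraph) (hst : ∀ i, G.IsSteinerTree S' (Ts i))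
    (hcis : G.CompletelyIndependent S' Ts) :
    ∃ Ts' : Fin r → G.Subgraph,
      (∀ i, G.IsSteinerTree S (Ts' i)) ∧ G.CompletelyIndependent S Ts' := by
  have hTree : ∀ i, (Ts i).coe.IsTree := fun i => (hst i).1
  have hSv : ∀ i, S ⊆ (Ts i).verts := fun i => hsub.trans (hst i).2.1
  refine ⟨fun i => prune (hTree i) (hSv i) hs₀, fun i => ?_, ?_⟩
  · refine ⟨prune_isTree _ _ _, subset_prune_verts _ _ _, ?_⟩
    intro v hv hno
    by_contra hvS
    exact hno (prune_internal _ _ _ hv hvS)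
  · intro p q hpq
    obtain ⟨hE, hV, hP⟩ := hcis p q hpq
    have H : ∀ x₁ ∈ S, ∀ x₂ ∈ S, x₁ ≠ x₂ →
        ∀ P Q : G.Walk x₁ x₂, P.IsPath → Q.IsPath → (Ts p).walkIn P → (Ts q).walkIn Q →
          ∀ v ∈ P.support, v ∈ Q.support → v = x₁ ∨ v = x₂ :=
      fun x₁ h1 x₂ h2 => hP x₁ (hsub h1) x₂ (hsub h2)
    refine ⟨?_, ?_, ?_⟩
    · rw [← Set.subset_empty_iff, ← hE]
      exact Set.inter_subset_inter (Subgraph.edgeSet_mono (prune_le _ _ _))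
        (Subgraph.edgeSet_mono (prune_le _ _ _))
    · apply Set.Subset.antisymm
      · rintro w ⟨hwp, hwq⟩
        by_contra hwS
        obtain ⟨ap, hap⟩ := (mem_prune_verts _ _ _).1 hwp
        obtain ⟨aq, haq⟩ := (mem_prune_verts _ _ _).1 hwq
        have hip : SepG (Ts p) (hTree p) w s₀ ↑ap := ⟨hSv p hs₀, hSv p ap.2, hap⟩
        have hiq : SepG (Ts q) (hTree q) w s₀ ↑aq := ⟨hSv q hs₀, hSv q aq.2, haq⟩
        exact no_common (hSv p) (hSv q) hs₀ ap.2 hs₀ aq.2 hwS hip hiq H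
      · intro s hs
        exact ⟨subset_prune_verts _ _ _ hs, subset_prune_verts _ _ _ hs⟩
    · intro x₁ h1 x₂ h2 hne P Q hPp hQp hwP hwQ
      exact H x₁ h1 x₂ h2 hne P Q hPp hQp
        (fun e he => Subgraph.edgeSet_mono (prune_le _ _ _) (hwP e he))
        (fun e he => Subgraph.edgeSet_mono (prune_le _ _ _) (hwQ e he))

lemma packing_le [Fintype V] {S S' : Set V} (hsub : S ⊆ S') {x y : V}
    (hx : x ∈ S) (hy : y ∈ S) (hxy : x ≠ y) :
    G.cisstPacking S' ≤ G.cisstPacking S := by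
  classical
  have hfin : Finite G.Subgraph := by
    have hinj : Function.Injective (fun T : G.Subgraph => (T.verts, T.Adj)) := by
      intro a b h
      exact Subgraph.ext (congrArg Prod.fst h) (congrArg Prod.snd h)
    exact Finite.of_injective _ hinj
  have hbdd : BddAbove {r | ∃ Ts : Fin r → G.Subgraph,
      (∀ i, G.IsSteinerTree S (Ts i)) ∧ G.CompletelyIndependent S Ts} := by
    refine ⟨Nat.card G.Subgraph + 1, ?_⟩
    rintro r ⟨Ts, hst, hcis⟩
    rcases le_or_gt r 1 with h | h
    · have : 1 ≤ Nat.card G.Subgraph + 1 := le_add_self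
      omega
    · have hinj : Function.Injective Ts := by
        intro p q hpq
        by_contra hne
        obtain ⟨hE, hV, -⟩ := hcis p q hne
        rw [hpq, Set.inter_self] at hE hV
        have hxv : x ∈ (Ts q).verts := hV.symm ▸ hx
        have hyv : y ∈ (Ts q).verts := hV.symm ▸ hy
        obtain ⟨Wlk⟩ := (hst q).1.1.preconnected ⟨x, hxv⟩ ⟨y, hyv⟩
        obtain ⟨z, hadj, r', -⟩ := Wlk.exists_eq_cons_of_ne (by simpa [Subtype.ext_iff] using hxy)
        have hmem : s(x, ↑z) ∈ (Ts q).edgeSet := Subgraph.mem_edgeSet.mpr hadj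
        rw [hE] at hmem
        exact hmem
      have hcard := Nat.card_le_card_of_injective Ts hinj
      rw [Nat.card_eq_fintype_card, Fintype.card_fin] at hcard
      omega
  refine csSup_le_csSup hbdd ⟨0, fun i => i.elim0, fun i => i.elim0, fun p => p.elim0⟩ ?_
  rintro r ⟨Ts, hst, hcis⟩
  obtain ⟨s₀, hs₀, -, -, -⟩ : ∃ s₀, s₀ ∈ S ∧ True ∧ True ∧ True := ⟨x, hx, trivial, trivial, trivial⟩
  exact exists_family hsub hs₀ Ts hst hcis

end Family

end CISTAux

theorem stmt_2 {V : Type*} [Fintype V] (G : SimpleGraph V) (hG : G.Connected)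
    (k l : ℕ) (hk : 2 ≤ k) (hkl : k ≤ l) (hl : l ≤ Fintype.card V) :
    G.genConnStar l ≤ G.genConnStar k := by
  classical
  have hkV : k ≤ Fintype.card V := hkl.trans hl
  have hkcard : k ≤ (Set.univ : Set V).ncard := by
    rwa [Set.ncard_univ, Nat.card_eq_fintype_card]
  obtain ⟨S1, -, hS1⟩ := Set.exists_subset_card_eq hkcard
  have hBne : (G.cisstPacking '' {S : Set V | S.ncard = k}).Nonempty :=
    ⟨_, ⟨S1, hS1, rfl⟩⟩
  obtain ⟨S₀, hS₀, hval⟩ := Nat.sInf_mem hBne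
  have hS₀k : S₀.ncard = k := hS₀
  obtain ⟨S', hsub, -, hcard'⟩ := Set.exists_subsuperset_card_eq (n := l) (Set.subset_univ S₀)
    (by rw [hS₀k]; exact hkl) (by rw [Set.ncard_univ, Nat.card_eq_fintype_card]; exact hl)
  have h1 : G.genConnStar l ≤ G.cisstPacking S' := Nat.sInf_le ⟨S', hcard', rfl⟩
  obtain ⟨x, y, hx, hy, hxy⟩ := (Set.one_lt_ncard_iff (Set.toFinite S₀)).mp (by omega)
  have h3 : G.cisstPacking S' ≤ G.cisstPacking S₀ := CISTAux.packing_le hsub hx hy hxy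
  calc G.genConnStar l ≤ G.cisstPacking S' := h1
    _ ≤ G.cisstPacking S₀ := h3
    _ = G.genConnStar k := hval
end

section
/- Let G be a finite simple connected graph on n vertices and S a vertex subset with |S| = k ≥ 2. Then κ*_k(G) ≤ κ*_k(G[S]) + (n − k), where G[S] is the subgraph of G induced by S. -/
open SimpleGraph

section Aux

variable {V : Type*} {G : SimpleGraph V}

/-- Transfer a subgraph of `G` whose vertices lie in `S` to a subgraph of `G.induce S`. -/
def toInduced (G : SimpleGraph V) (S : Set V) (T : G.Subgraph) : (G.induce S).Subgraph where
  verts := Set.univ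
  Adj a b := T.Adj ↑a ↑b
  adj_sub h := h.adj_sub
  edge_vert _ := Set.mem_univ _
  symm := ⟨fun _ _ h => h.symm⟩

lemma iso_isTree {α β : Type*} {H : SimpleGraph α} {H' : SimpleGraph β} (e : H ≃g H')
    (h : H.IsTree) : H'.IsTree := by
  constructor
  · exact (Iso.connected_iff e).mp h.isConnected
  · intro v c hc
    exact h.IsAcyclic (c.map e.symm.toHom) (hc.map (RelIso.injective e.symm))

/-- The obvious isomorphism between the coercions. -/
def coeIso {S : Set V} {T : G.Subgraph} (hT : T.verts = S) :
    (toInduced G S T).coe ≃g T.coe where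
  toFun v := ⟨v.1.1, hT ▸ v.1.2⟩
  invFun w := ⟨⟨w.1, hT ▸ w.2⟩, Set.mem_univ _⟩
  left_inv v := rfl
  right_inv w := rfl
  map_rel_iff' := Iff.rfl

def inducedHom (G : SimpleGraph V) (S : Set V) : G.induce S →g G :=
  ⟨Subtype.val, fun h => h⟩

lemma packing_bddAbove {W : Type*} [Fintype W] (H : SimpleGraph W) (S : Set W)
    (h2 : 2 ≤ S.ncard) :
    BddAbove {m | ∃ Ts : Fin m → H.Subgraph,
      (∀ i, H.IsSteinerTree S (Ts i)) ∧ H.CompletelyIndependent S Ts} := by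
  classical
  refine ⟨Fintype.card (Sym2 W), ?_⟩
  rintro m ⟨Ts, hSt, hCI⟩
  obtain ⟨x, y, hx, hy, hxy⟩ := (Set.one_lt_ncard_iff (Set.toFinite S)).mp h2
  have hedge : ∀ i : Fin m, ∃ e, e ∈ (Ts i).edgeSet := by
    intro i
    have hxv : x ∈ (Ts i).verts := (hSt i).2.1 hx
    have hyv : y ∈ (Ts i).verts := (hSt i).2.1 hy
    obtain ⟨w⟩ := (hSt i).1.isConnected.preconnected ⟨x, hxv⟩ ⟨y, hyv⟩
    cases w with
    | nil => exact (hxy rfl).elim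
    | cons h p => exact ⟨_, SimpleGraph.Subgraph.mem_edgeSet.mpr h⟩
  choose g hg using hedge
  have hginj : Function.Injective g := by
    intro i j hij
    by_contra hne
    have hmem : g i ∈ (Ts i).edgeSet ∩ (Ts j).edgeSet := ⟨hg i, hij ▸ hg j⟩
    rw [(hCI i j hne).1] at hmem
    exact hmem
  calc m = Fintype.card (Fin m) := (Fintype.card_fin m).symm
    _ ≤ _ := Fintype.card_le_of_injective g hginj

end Aux

theorem stmt_3 {V : Type*} [Fintype V] (G : SimpleGraph V) (hG : G.Connected)
    (S : Set V) (k : ℕ) (hk : 2 ≤ k) (hS : S.ncard = k) :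
    G.genConnStar k ≤ (G.induce S).genConnStar k + (Fintype.card V - k) := by
  classical
  haveI : Fintype ↥S := (Set.toFinite S).fintype
  have huniv : (Set.univ : Set ↥S).ncard = k := by
    rw [Set.ncard_univ, Nat.card_coe_set_eq, hS]
  have hset : {S' : Set ↥S | S'.ncard = k} = {Set.univ} := by
    ext S'
    simp only [Set.mem_setOf_eq, Set.mem_singleton_iff]
    constructor
    · intro h
      exact Set.eq_of_subset_of_ncard_le (Set.subset_univ S')
        (by rw [h, huniv]) (Set.toFinite _)
    · rintro rfl; exact huniv
  have hstar : (G.induce S).genConnStar k = (G.induce S).cisstPacking Set.univ := by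
    rw [SimpleGraph.genConnStar, hset, Set.image_singleton, csInf_singleton]
  have h1 : G.genConnStar k ≤ G.cisstPacking S := Nat.sInf_le ⟨S, hS, rfl⟩
  refine h1.trans ?_
  rw [hstar]
  have h0 : 0 ∈ {n | ∃ Ts : Fin n → G.Subgraph,
      (∀ i, G.IsSteinerTree S (Ts i)) ∧ G.CompletelyIndependent S Ts} :=
    ⟨Fin.elim0, fun i => i.elim0, fun p q _ => p.elim0⟩
  apply csSup_le ⟨0, h0⟩
  rintro m ⟨Ts, hSt, hCI⟩
  set A : Finset (Fin m) := Finset.univ.filter (fun i => (Ts i).verts = S) with hA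
  have hcard : A.card + Aᶜ.card = m := by
    rw [Finset.card_add_card_compl, Fintype.card_fin]
  -- Step A : trees using vertices outside S
  have hScard : S.ncard + Sᶜ.ncard = Fintype.card V := by
    rw [Set.ncard_add_ncard_compl, Nat.card_eq_fintype_card]
  have hcompl : Aᶜ.card ≤ Fintype.card V - k := by
    have hchoice : ∀ i : Fin m, ∃ v : V, i ∈ Aᶜ → v ∈ (Ts i).verts ∧ v ∉ S := by
      intro i
      by_cases hi : i ∈ Aᶜ
      · have hne : (Ts i).verts ≠ S := by
          intro h
          exact (Finset.mem_compl.mp hi) (by simp [hA, h])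
        have hsub : S ⊆ (Ts i).verts := (hSt i).2.1
        by_contra h
        push_neg at h
        refine hne (Set.Subset.antisymm (fun v hv => ?_) hsub)
        by_contra hvS
        exact hvS ((h v).2 hv)
      · obtain ⟨x, hx⟩ : S.Nonempty := Set.nonempty_of_ncard_ne_zero (by omega)
        exact ⟨x, fun h => absurd h hi⟩
    choose f hf using hchoice
    have hle : Aᶜ.card ≤ Sᶜ.toFinset.card := by
      refine Finset.card_le_card_of_injOn f (fun i hi => ?_) ?_
      · simpa using (hf i hi).2
      · intro i hi j hj hij
        by_contra hne
        have h1 : f i ∈ (Ts i).verts ∩ (Ts j).verts :=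
          ⟨(hf i (by simpa using hi)).1, hij ▸ (hf j (by simpa using hj)).1⟩
        rw [(hCI i j hne).2.1] at h1
        exact (hf i (by simpa using hi)).2 h1
    have : Sᶜ.toFinset.card = Sᶜ.ncard := (Set.ncard_eq_toFinset_card' _).symm
    omega
  -- Step B : trees inside S transfer to the induced graph
  have hin : A.card ≤ (G.induce S).cisstPacking Set.univ := by
    refine le_csSup (packing_bddAbove _ _ (by omega)) ?_
    refine ⟨fun j => toInduced G S (Ts ↑(A.equivFin.symm j)), ?_, ?_⟩
    · intro j
      have hiA : (↑(A.equivFin.symm j) : Fin m) ∈ A := (A.equivFin.symm j).2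
      have hT : (Ts ↑(A.equivFin.symm j)).verts = S := (Finset.mem_filter.mp hiA).2
      exact ⟨iso_isTree (coeIso hT).symm (hSt _).1, Set.Subset.rfl,
        fun v _ _ => Set.mem_univ v⟩
    · intro p q hpq
      have hne : (↑(A.equivFin.symm p) : Fin m) ≠ ↑(A.equivFin.symm q) := by
        intro h
        exact hpq (A.equivFin.symm.injective (Subtype.ext h))
      obtain ⟨hE, hV, hP⟩ := hCI _ _ hne
      refine ⟨?_, ?_, ?_⟩
      · ext e
        simp only [Set.mem_inter_iff, Set.mem_empty_iff_false, iff_false]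
        refine Sym2.ind (fun a b h => ?_) e
        have hmem : s((a : V), (b : V)) ∈ (Ts ↑(A.equivFin.symm p)).edgeSet ∩
            (Ts ↑(A.equivFin.symm q)).edgeSet := ⟨h.1, h.2⟩
        rw [hE] at hmem
        exact hmem
      · exact Set.univ_inter _
      · intro x₁ _ x₂ _ hx P Q hPp hQp hPin hQin v hvP hvQ
        have hx' : (↑x₁ : V) ≠ ↑x₂ := fun h => hx (Subtype.ext h)
        have hιinj : Function.Injective (inducedHom G S) := Subtype.coe_injective
        have hwalkIn : ∀ (i : Fin m) (R : (G.induce S).Walk x₁ x₂),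
            (toInduced G S (Ts i)).walkIn R → (Ts i).walkIn (R.map (inducedHom G S)) := by
          intro i R hR e he
          rw [SimpleGraph.Walk.edges_map, List.mem_map] at he
          obtain ⟨e', he', rfl⟩ := he
          have h := hR e' he'
          revert h
          refine Sym2.ind (fun a b h => ?_) e'
          exact h
        have := hP ↑x₁ x₁.2 ↑x₂ x₂.2 hx'
          (P.map (inducedHom G S)) (Q.map (inducedHom G S))
          (SimpleGraph.Walk.map_isPath_of_injective hιinj hPp)
          (SimpleGraph.Walk.map_isPath_of_injective hιinj hQp)
          (hwalkIn _ P hPin) (hwalkIn _ Q hQin) ↑v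
          (by have h := List.mem_map_of_mem (f := inducedHom G S) hvP; rw [← SimpleGraph.Walk.support_map] at h; exact h)
          (by have h := List.mem_map_of_mem (f := inducedHom G S) hvQ; rw [← SimpleGraph.Walk.support_map] at h; exact h)
        rcases this with h | h
        · exact Or.inl (Subtype.ext h)
        · exact Or.inr (Subtype.ext h)
  omega
end

section
/- For every n ≥ 4, the complete graph K_n contains ⌊n/2⌋ pairwise completely independent spanning trees. -/
open SimpleGraph

namespace CISTAux



variable {α : Type*} {G : SimpleGraph α}

lemma exists_edge_of_ne_end {a b : α} (W : G.Walk a b) :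
    ∀ v ∈ W.support, v ≠ b → ∃ y, s(v, y) ∈ W.edges := by
  induction W with
  | nil => intro v hv hvb; simp only [Walk.support_nil, List.mem_singleton] at hv; exact absurd hv hvb
  | @cons u x w h W ih =>
    intro v hv hvb
    rw [Walk.support_cons, List.mem_cons] at hv
    rcases hv with rfl | hv
    · exact ⟨x, by simp⟩
    · obtain ⟨y, hy⟩ := ih v hv hvb
      exact ⟨y, by simp [hy]⟩

lemma two_nbrs : ∀ {a b : α} (W : G.Walk a b), W.IsPath →
    ∀ v ∈ W.support, v ≠ a → v ≠ b →
      ∃ y z, y ≠ z ∧ s(v, y) ∈ W.edges ∧ s(v, z) ∈ W.edges := by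
  intro a b W
  induction W with
  | nil => intro _ v hv hva _; simp only [Walk.support_nil, List.mem_singleton] at hv; exact absurd hv hva
  | @cons u x w h W ih =>
    intro hW v hv hva hvb
    rw [Walk.support_cons, List.mem_cons] at hv
    rcases hv with rfl | hv
    · exact absurd rfl hva
    by_cases hvx : v = x
    · subst hvx
      cases W with
      | nil => exact absurd rfl hvb
      | @cons _ y _ h' R =>
        refine ⟨u, y, ?_, by simp [Sym2.eq_swap], by simp⟩
        rintro rfl
        have hnd := hW.support_nodup
        rw [Walk.support_cons, List.nodup_cons] at hnd
        exact hnd.1 (by rw [Walk.support_cons]; exact List.mem_cons_of_mem _ R.start_mem_support)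
    · obtain ⟨y, z, hyz, hy, hz⟩ := ih hW.of_cons v hv hvx hvb
      exact ⟨y, z, hyz, by simp [hy], by simp [hz]⟩

lemma cycle_two_nbrs {u : α} (c : G.Walk u u) (hc : c.IsCycle) :
    ∀ v ∈ c.support, ∃ y z, y ≠ z ∧ s(v, y) ∈ c.edges ∧ s(v, z) ∈ c.edges := by
  intro v hv
  have h3 := hc.three_le_length
  cases c with
  | nil => simp at h3
  | @cons _ x _ h P =>
    have hPnd : P.support.Nodup := by
      have := hc.support_nodup
      rwa [Walk.support_cons, List.tail_cons] at this
    have hPpath : P.IsPath := (Walk.isPath_def P).mpr hPnd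
    have hPlen : 2 ≤ P.length := by
      simp only [Walk.length_cons] at h3; omega
    have hxu : x ≠ u := by
      rintro rfl
      rw [Walk.isPath_iff_eq_nil] at hPpath
      rw [hPpath] at hPlen
      simp at hPlen
    have hfe : s(u, x) ∉ P.edges := by
      have := hc.edges_nodup
      rw [Walk.edges_cons, List.nodup_cons] at this
      exact this.1
    rw [Walk.support_cons, List.mem_cons] at hv
    by_cases hvu : v = u
    · subst hvu
      obtain ⟨z, hz⟩ := exists_edge_of_ne_end P.reverse v (by simp) (Ne.symm hxu)
      rw [Walk.edges_reverse, List.mem_reverse] at hz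
      refine ⟨x, z, ?_, by simp, by simp [hz]⟩
      rintro rfl
      exact hfe hz
    have hv' : v ∈ P.support := by tauto
    by_cases hvx : v = x
    · subst hvx
      cases P with
      | nil => simp at hPlen
      | @cons _ y _ h' R =>
        refine ⟨u, y, ?_, by simp [Sym2.eq_swap], by simp⟩
        rintro rfl
        have hRnd : R.support.Nodup := by
          rw [Walk.support_cons, List.nodup_cons] at hPnd; exact hPnd.2
        have hRnil := (Walk.isPath_iff_eq_nil).mp ((Walk.isPath_def R).mpr hRnd)
        rw [Walk.length_cons, hRnil] at hPlen
        simp at hPlen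
    · obtain ⟨y, z, hyz, hy, hz⟩ := two_nbrs P hPpath v hv' hvx hvu
      exact ⟨y, z, hyz, by simp [hy], by simp [hz]⟩


/-- attachment point of vertex `v` in the `i`-th tree. -/
def att (k i v : ℕ) : ℕ :=
  if 2 * k ≤ v then i
  else if (k ≤ v ↔ i < v % k) then i else i + k

lemma att_mem (k i v : ℕ) : att k i v = i ∨ att k i v = i + k := by
  unfold att; split_ifs <;> simp

lemma att_lo {k i j : ℕ} (hk : 0 < k) (hj : j < k) :
    att k i j = if i < j then i + k else i := by
  unfold att
  rw [if_neg (by omega), Nat.mod_eq_of_lt hj]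
  split_ifs <;> omega

lemma att_hi {k i j : ℕ} (hj : j < k) :
    att k i (j + k) = if i < j then i else i + k := by
  unfold att
  rw [if_neg (by omega), Nat.add_mod_right, Nat.mod_eq_of_lt hj]
  split_ifs <;> omega

/-- the edge relation of the `i`-th tree -/
def rel (n k i : ℕ) (a b : Fin n) : Prop :=
  ((a : ℕ) = i ∧ (b : ℕ) = i + k) ∨ ((a : ℕ) = i + k ∧ (b : ℕ) = i) ∨
  ((a : ℕ) ≠ i ∧ (a : ℕ) ≠ i + k ∧ (b : ℕ) = att k i (a : ℕ)) ∨
  ((b : ℕ) ≠ i ∧ (b : ℕ) ≠ i + k ∧ (a : ℕ) = att k i (b : ℕ))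

lemma rel_symm {n k i : ℕ} {a b : Fin n} (h : rel n k i a b) : rel n k i b a := by
  unfold rel at *; tauto

lemma rel_ne {n k i : ℕ} (hk : 0 < k) {a b : Fin n} (h : rel n k i a b) : a ≠ b := by
  have h1 := att_mem k i (a : ℕ)
  have h2 := att_mem k i (b : ℕ)
  intro hab
  rw [hab] at h
  unfold rel at h
  rcases h with ⟨h3, h4⟩ | ⟨h3, h4⟩ | ⟨h3, h4, h5⟩ | ⟨h3, h4, h5⟩ <;> omega

/-- degree lemma: a vertex with two distinct neighbours is a centre -/
lemma rel_deg {n k i : ℕ} {a b c : Fin n} (hb : rel n k i a b) (hc : rel n k i a c)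
    (hbc : b ≠ c) : (a : ℕ) = i ∨ (a : ℕ) = i + k := by
  by_contra h
  push_neg at h
  have hb' : (b : ℕ) = att k i (a : ℕ) := by
    have := att_mem k i (b : ℕ)
    unfold rel at hb
    rcases hb with ⟨h3, h4⟩ | ⟨h3, h4⟩ | ⟨h3, h4, h5⟩ | ⟨h3, h4, h5⟩ <;> omega
  have hc' : (c : ℕ) = att k i (a : ℕ) := by
    have := att_mem k i (c : ℕ)
    unfold rel at hc
    rcases hc with ⟨h3, h4⟩ | ⟨h3, h4⟩ | ⟨h3, h4, h5⟩ | ⟨h3, h4, h5⟩ <;> omega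
  exact hbc (Fin.ext (hb'.trans hc'.symm))

/-- edge-disjointness -/
lemma rel_disj {n k p q : ℕ} (hp : p < k) (hq : q < k) (hpq : p ≠ q) {a b : Fin n}
    (h1 : rel n k p a b) (h2 : rel n k q a b) : False := by
  have key : ∀ x y : Fin n, (x : ℕ) ≠ p → (x : ℕ) ≠ p + k → (y : ℕ) = att k p (x : ℕ) →
      (y : ℕ) ≠ q → (y : ℕ) ≠ q + k → (x : ℕ) = att k q (y : ℕ) → False := by
    intro x y hx1 hx2 hy hy1 hy2 hx
    have hmp := att_mem k p (x : ℕ)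
    have hmq := att_mem k q (y : ℕ)
    -- x ∈ {q, q+k}, y ∈ {p, p+k}
    have hxq : (x : ℕ) = q ∨ (x : ℕ) = q + k := by omega
    have hyp : (y : ℕ) = p ∨ (y : ℕ) = p + k := by omega
    rcases hxq with hxq | hxq
    · rw [hxq, att_lo (by omega) hq] at hy
      rcases hyp with hyp | hyp
      · rw [hyp, att_lo (by omega) hp] at hx
        split_ifs at hy hx <;> omega
      · rw [hyp, att_hi hp] at hx
        split_ifs at hy hx <;> omega
    · rw [hxq, att_hi hq] at hy
      rcases hyp with hyp | hyp
      · rw [hyp, att_lo (by omega) hp] at hx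
        split_ifs at hy hx <;> omega
      · rw [hyp, att_hi hp] at hx
        split_ifs at hy hx <;> omega
  have hmpa := att_mem k p (a : ℕ)
  have hmpb := att_mem k p (b : ℕ)
  have hmqa := att_mem k q (a : ℕ)
  have hmqb := att_mem k q (b : ℕ)
  unfold rel at h1 h2
  rcases h1 with ⟨u1, u2⟩ | ⟨u1, u2⟩ | ⟨u1, u2, u3⟩ | ⟨u1, u2, u3⟩ <;>
    rcases h2 with ⟨w1, w2⟩ | ⟨w1, w2⟩ | ⟨w1, w2, w3⟩ | ⟨w1, w2, w3⟩
  all_goals first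
    | omega
    | exact key a b u1 u2 u3 w1 w2 w3
    | exact key b a u1 u2 u3 w1 w2 w3
    | exact key a b w1 w2 w3 u1 u2 u3
    | exact key b a w1 w2 w3 u1 u2 u3

/-- the `i`-th tree as a subgraph of the complete graph -/
def mkT (n : ℕ) (hn : 4 ≤ n) (i : Fin (n / 2)) : (⊤ : SimpleGraph (Fin n)).Subgraph where
  verts := Set.univ
  Adj a b := rel n (n / 2) i.val a b
  adj_sub h := by
    simp only [top_adj]
    exact rel_ne (by omega) h
  edge_vert _ := Set.mem_univ _
  symm := ⟨fun a b h => rel_symm h⟩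

lemma mkT_adj {n : ℕ} {hn : 4 ≤ n} {i : Fin (n / 2)} {a b : Fin n} :
    (mkT n hn i).Adj a b ↔ rel n (n / 2) i.val a b := Iff.rfl









lemma mkT_isTree (n : ℕ) (hn : 4 ≤ n) (i : Fin (n / 2)) : (mkT n hn i).coe.IsTree := by
  have hik : (i : ℕ) < n / 2 := i.isLt
  have hadj01 : (mkT n hn i).coe.Adj
      ⟨⟨(i : ℕ) + n / 2, by omega⟩, Set.mem_univ _⟩ ⟨⟨(i : ℕ), by omega⟩, Set.mem_univ _⟩ := by
    show rel n (n / 2) i.val _ _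
    exact Or.inr (Or.inl ⟨rfl, rfl⟩)
  constructor
  · -- connected
    rw [connected_iff_exists_forall_reachable]
    refine ⟨⟨⟨(i : ℕ), by omega⟩, Set.mem_univ _⟩, ?_⟩
    rintro ⟨⟨v, hv⟩, hv'⟩
    refine Reachable.symm ?_
    by_cases h0 : v = (i : ℕ)
    · have : (⟨⟨v, hv⟩, hv'⟩ : (mkT n hn i).verts) = ⟨⟨(i : ℕ), by omega⟩, Set.mem_univ _⟩ :=
        Subtype.ext (Fin.ext h0)
      rw [this]
    by_cases h1 : v = (i : ℕ) + n / 2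
    · have : (⟨⟨v, hv⟩, hv'⟩ : (mkT n hn i).verts) =
          ⟨⟨(i : ℕ) + n / 2, by omega⟩, Set.mem_univ _⟩ := Subtype.ext (Fin.ext h1)
      rw [this]
      exact hadj01.reachable
    · have hm := att_mem (n / 2) i.val v
      have hlt : att (n / 2) i.val v < n := by omega
      have hA : (mkT n hn i).coe.Adj ⟨⟨v, hv⟩, hv'⟩ ⟨⟨att (n / 2) i.val v, hlt⟩, Set.mem_univ _⟩ := by
        show rel n (n / 2) i.val _ _
        exact Or.inr (Or.inr (Or.inl ⟨h0, h1, rfl⟩))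
      refine hA.reachable.trans ?_
      rcases hm with hm | hm
      · have : (⟨⟨att (n / 2) i.val v, hlt⟩, Set.mem_univ _⟩ : (mkT n hn i).verts) =
            ⟨⟨(i : ℕ), by omega⟩, Set.mem_univ _⟩ := Subtype.ext (Fin.ext hm)
        rw [this]
      · have : (⟨⟨att (n / 2) i.val v, hlt⟩, Set.mem_univ _⟩ : (mkT n hn i).verts) =
            ⟨⟨(i : ℕ) + n / 2, by omega⟩, Set.mem_univ _⟩ := Subtype.ext (Fin.ext hm)
        rw [this]
        exact hadj01.reachable
  · -- acyclic
    intro w c hc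
    have h3 := hc.three_le_length
    have hvals : ∀ v ∈ c.support, ((v : Fin n) : ℕ) = (i : ℕ) ∨
        ((v : Fin n) : ℕ) = (i : ℕ) + n / 2 := by
      intro v hv
      obtain ⟨y, z, hyz, hy, hz⟩ := cycle_two_nbrs c hc v hv
      have ay' := c.edges_subset_edgeSet hy
      have az' := c.edges_subset_edgeSet hz
      rw [mem_edgeSet] at ay' az'
      have ay : rel n (n / 2) i.val (v : Fin n) (y : Fin n) := ay'
      have az : rel n (n / 2) i.val (v : Fin n) (z : Fin n) := az'
      exact rel_deg ay az (fun h => hyz (Subtype.ext h))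
    have hnd : c.support.tail.Nodup := hc.support_nodup
    have hlen : c.support.tail.length = c.length := by
      rw [List.length_tail, c.length_support]; omega
    have hinj : Function.Injective (fun x : (mkT n hn i).verts => ((x : Fin n) : ℕ)) :=
      fun a b hab => Subtype.ext (Fin.ext hab)
    have hLnd : (c.support.tail.map (fun x : (mkT n hn i).verts => ((x : Fin n) : ℕ))).Nodup :=
      hnd.map hinj
    have hLlen : (c.support.tail.map (fun x : (mkT n hn i).verts => ((x : Fin n) : ℕ))).length
        = c.length := by rw [List.length_map, hlen]
    have hsub : (c.support.tail.map (fun x : (mkT n hn i).verts => ((x : Fin n) : ℕ))).toFinset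
        ⊆ {(i : ℕ), (i : ℕ) + n / 2} := by
      intro x hx
      rw [List.mem_toFinset, List.mem_map] at hx
      obtain ⟨v, hv, rfl⟩ := hx
      rcases hvals v (List.mem_of_mem_tail hv) with h | h <;> simp [h]
    have hcard := Finset.card_le_card hsub
    rw [List.toFinset_card_of_nodup hLnd] at hcard
    have : ({(i : ℕ), (i : ℕ) + n / 2} : Finset ℕ).card ≤ 2 :=
      (Finset.card_insert_le _ _).trans (by simp)
    omega

end CISTAux

theorem stmt_4 (n : ℕ) (hn : 4 ≤ n) :
    ∃ Ts : Fin (n / 2) → (⊤ : SimpleGraph (Fin n)).Subgraph,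
      (∀ i, (Ts i).verts = Set.univ ∧ (Ts i).coe.IsTree) ∧
      (⊤ : SimpleGraph (Fin n)).CompletelyIndependent Set.univ Ts := by
  refine ⟨fun i => CISTAux.mkT n hn i, fun i => ⟨rfl, CISTAux.mkT_isTree n hn i⟩, ?_⟩
  intro p q hpq
  have hpv : (p : ℕ) ≠ (q : ℕ) := fun h => hpq (Fin.ext h)
  refine ⟨?_, Set.univ_inter _, ?_⟩
  · rw [Set.eq_empty_iff_forall_notMem]
    intro e
    induction e using Sym2.ind with
    | _ a b =>
      rintro ⟨h1, h2⟩
      rw [Subgraph.mem_edgeSet] at h1 h2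
      exact CISTAux.rel_disj p.isLt q.isLt hpv h1 h2
  · intro x₁ _ x₂ _ hx PW QW hP hQ hPin hQin v hvP hvQ
    by_contra hcon
    push_neg at hcon
    obtain ⟨hv1, hv2⟩ := hcon
    obtain ⟨y, z, hyz, hy, hz⟩ := CISTAux.two_nbrs PW hP v hvP hv1 hv2
    obtain ⟨y', z', hyz', hy', hz'⟩ := CISTAux.two_nbrs QW hQ v hvQ hv1 hv2
    have r1 : CISTAux.rel n (n / 2) p.val v y := (Subgraph.mem_edgeSet).mp (hPin _ hy)
    have r2 : CISTAux.rel n (n / 2) p.val v z := (Subgraph.mem_edgeSet).mp (hPin _ hz)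
    have r3 : CISTAux.rel n (n / 2) q.val v y' := (Subgraph.mem_edgeSet).mp (hQin _ hy')
    have r4 : CISTAux.rel n (n / 2) q.val v z' := (Subgraph.mem_edgeSet).mp (hQin _ hz')
    have hvp := CISTAux.rel_deg r1 r2 hyz
    have hvq := CISTAux.rel_deg r3 r4 hyz'
    have h1 := p.isLt
    have h2 := q.isLt
    omega
end

section
/- Let S be a vertex subset of the complete graph K_n with |S| = s ≥ 2 and n ≥ 4. Then K_n contains n − ⌈s/2⌉ pairwise completely independent S-Steiner trees. -/
open SimpleGraph

namespace SteinerAux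


/-- The start of a cycle has two distinct neighbours. -/
lemma cycle_two_nbrs {V : Type*} {G : SimpleGraph V} {v : V} {c : G.Walk v v}
    (hc : c.IsCycle) : ∃ x y, x ≠ y ∧ G.Adj v x ∧ G.Adj v y := by
  cases c with
  | nil => exact absurd rfl hc.ne_nil
  | @cons _ w _ h p =>
    rw [SimpleGraph.Walk.cons_isCycle_iff] at hc
    obtain ⟨hp, he⟩ := hc
    have hnn : ¬ p.reverse.Nil := SimpleGraph.Walk.not_nil_of_ne (fun hvw => h.ne hvw)
    obtain ⟨u, h', q, hq⟩ := SimpleGraph.Walk.not_nil_iff.mp hnn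
    refine ⟨u, w, ?_, h', h⟩
    rintro rfl
    apply he
    have h1 : s(v, u) ∈ p.reverse.edges := by rw [hq]; simp
    rw [SimpleGraph.Walk.edges_reverse, List.mem_reverse] at h1
    exact h1

lemma cycle_support_two_nbrs {V : Type*} {G : SimpleGraph V} {v u : V} {c : G.Walk v v}
    (hc : c.IsCycle) (hu : u ∈ c.support) : ∃ x y, x ≠ y ∧ G.Adj u x ∧ G.Adj u y := by
  classical
  exact cycle_two_nbrs (hc.rotate hu)

/-- If only two vertices can have two distinct neighbours, the graph is acyclic. -/
lemma acyclic_of_two_internal {V : Type*} {G : SimpleGraph V} (a b : V)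
    (h : ∀ v, (∃ x y, x ≠ y ∧ G.Adj v x ∧ G.Adj v y) → v = a ∨ v = b) :
    G.IsAcyclic := by
  intro v c hc
  have h3 : 3 ≤ c.length := hc.three_le_length
  have hnd : c.support.tail.Nodup := hc.support_nodup
  have hlen : c.support.tail.length = c.length := by
    have := SimpleGraph.Walk.length_support c
    have ht : c.support.tail.length = c.support.length - 1 := by simp
    omega
  have hget : ∀ (i : Fin c.support.tail.length),
      c.support.tail.get i = a ∨ c.support.tail.get i = b := by
    intro i
    apply h
    exact cycle_support_two_nbrs hc
      (List.mem_of_mem_tail (c.support.tail.get_mem i))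
  have hinj : ∀ (i j : Fin c.support.tail.length),
      c.support.tail.get i = c.support.tail.get j → i = j := fun i j hij =>
    (List.Nodup.get_inj_iff hnd).mp hij
  have l3 : 3 ≤ c.support.tail.length := by omega
  have e01 : (⟨0, by omega⟩ : Fin c.support.tail.length) ≠ ⟨1, by omega⟩ := by
    simp [Fin.ext_iff]
  have e02 : (⟨0, by omega⟩ : Fin c.support.tail.length) ≠ ⟨2, by omega⟩ := by
    simp [Fin.ext_iff]
  have e12 : (⟨1, by omega⟩ : Fin c.support.tail.length) ≠ ⟨2, by omega⟩ := by
    simp [Fin.ext_iff]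
  rcases hget ⟨0, by omega⟩ with h0 | h0 <;> rcases hget ⟨1, by omega⟩ with h1 | h1 <;>
    rcases hget ⟨2, by omega⟩ with h2 | h2
  · exact e01 (hinj _ _ (h0.trans h1.symm))
  · exact e01 (hinj _ _ (h0.trans h1.symm))
  · exact e02 (hinj _ _ (h0.trans h2.symm))
  · exact e12 (hinj _ _ (h1.trans h2.symm))
  · exact e12 (hinj _ _ (h1.trans h2.symm))
  · exact e02 (hinj _ _ (h0.trans h2.symm))
  · exact e01 (hinj _ _ (h0.trans h1.symm))
  · exact e01 (hinj _ _ (h0.trans h1.symm))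

/-- An interior vertex of a path lying in a subgraph has two distinct neighbours there. -/
lemma internal_of_path {V : Type*} {G : SimpleGraph V} {T : G.Subgraph} {x₁ x₂ v : V}
    {P : G.Walk x₁ x₂} (hP : P.IsPath) (hPT : T.walkIn P) (hv : v ∈ P.support)
    (h1 : v ≠ x₁) (h2 : v ≠ x₂) : ∃ a b, a ≠ b ∧ T.Adj v a ∧ T.Adj v b := by
  classical
  set P1 := P.takeUntil v hv with hP1
  set P2 := P.dropUntil v hv with hP2
  have hspec : P1.append P2 = P := P.take_spec hv
  have hnn2 : ¬ P2.Nil := SimpleGraph.Walk.not_nil_of_ne h2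
  obtain ⟨u2, hadj2, q2, hq2⟩ := SimpleGraph.Walk.not_nil_iff.mp hnn2
  have hnn1 : ¬ P1.reverse.Nil := SimpleGraph.Walk.not_nil_of_ne h1
  obtain ⟨u1, hadj1, q1, hq1⟩ := SimpleGraph.Walk.not_nil_iff.mp hnn1
  have he2 : s(v, u2) ∈ P.edges := by
    rw [← hspec, SimpleGraph.Walk.edges_append, List.mem_append]
    right; rw [hq2]; simp
  have he1 : s(v, u1) ∈ P.edges := by
    rw [← hspec, SimpleGraph.Walk.edges_append, List.mem_append]
    left
    have : s(v, u1) ∈ P1.reverse.edges := by rw [hq1]; simp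
    rwa [SimpleGraph.Walk.edges_reverse, List.mem_reverse] at this
  have hT2 : T.Adj v u2 := (Subgraph.mem_edgeSet).mp (hPT _ he2)
  have hT1 : T.Adj v u1 := (Subgraph.mem_edgeSet).mp (hPT _ he1)
  refine ⟨u1, u2, ?_, hT1, hT2⟩
  have hmem1 : u1 ∈ P1.support := by
    have : u1 ∈ P1.reverse.support := by rw [hq1]; simp
    rwa [SimpleGraph.Walk.support_reverse, List.mem_reverse] at this
  have hmem2 : u2 ∈ P2.support.tail := by
    rw [hq2]; simp
  have hnd : (P1.support ++ P2.support.tail).Nodup := by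
    rw [← SimpleGraph.Walk.support_append, hspec]
    exact hP.support_nodup
  have hdisj := (List.nodup_append'.mp hnd).2.2
  intro he
  exact hdisj hmem1 (he ▸ hmem2)

/-- Criterion for complete independence in terms of internal vertices. -/
lemma ci_of {V : Type*} {G : SimpleGraph V} (S : Set V) {ι : Type*} (Ts : ι → G.Subgraph)
    (hedge : ∀ p q, p ≠ q → (Ts p).edgeSet ∩ (Ts q).edgeSet = ∅)
    (hvert : ∀ p q, p ≠ q → (Ts p).verts ∩ (Ts q).verts = S)
    (hint : ∀ p q, p ≠ q → ∀ v, (∃ a b, a ≠ b ∧ (Ts p).Adj v a ∧ (Ts p).Adj v b) →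
        (∃ a b, a ≠ b ∧ (Ts q).Adj v a ∧ (Ts q).Adj v b) → False) :
    G.CompletelyIndependent S Ts := by
  intro p q hpq
  refine ⟨hedge p q hpq, hvert p q hpq, ?_⟩
  intro x1 hx1 x2 hx2 hne P Q hP hQ hPT hQT v hvP hvQ
  by_contra hcon
  push_neg at hcon
  exact hint p q hpq v (internal_of_path hP hPT hvP hcon.1 hcon.2)
    (internal_of_path hQ hQT hvQ hcon.1 hcon.2)

lemma edge_disjoint_of {V : Type*} {G : SimpleGraph V} {T T' : G.Subgraph}
    (h : ∀ x y, T.Adj x y → T'.Adj x y → False) : T.edgeSet ∩ T'.edgeSet = ∅ := by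
  ext e
  induction e with
  | _ x y =>
    simp only [Set.mem_inter_iff, Set.mem_empty_iff_false, iff_false, not_and,
      Subgraph.mem_edgeSet]
    exact h x y



variable {V : Type*}

def gadgetAdj (a b : V) (A B : Set V) (x y : V) : Prop :=
  (x = a ∧ y = b) ∨ (x = b ∧ y = a) ∨ (x = a ∧ y ∈ A) ∨ (y = a ∧ x ∈ A) ∨
    (x = b ∧ y ∈ B) ∨ (y = b ∧ x ∈ B)

lemma gadgetAdj.symm {a b : V} {A B : Set V} {x y : V} (h : gadgetAdj a b A B x y) :
    gadgetAdj a b A B y x := by unfold gadgetAdj at *; tauto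

/-- A double-star-shaped subgraph of the complete graph: centres `a, b`, leaves
`A` attached to `a` and `B` attached to `b`. -/
def gadget (a b : V) (A B : Set V) : (⊤ : SimpleGraph V).Subgraph where
  verts := {a, b} ∪ A ∪ B
  Adj x y := x ≠ y ∧ gadgetAdj a b A B x y
  adj_sub h := h.1
  edge_vert := by
    rintro x y ⟨-, h⟩
    rcases h with ⟨rfl, -⟩ | ⟨rfl, -⟩ | ⟨rfl, -⟩ | ⟨-, hx⟩ | ⟨rfl, -⟩ | ⟨-, hx⟩ <;> simp [*]
  symm := ⟨fun x y h => ⟨h.1.symm, h.2.symm⟩⟩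

section gadget

variable {a b : V} {A B : Set V}
variable (hab : a ≠ b) (haA : a ∉ A) (hbA : b ∉ A) (haB : a ∉ B) (hbB : b ∉ B)
  (hAB : ∀ x, x ∈ A → x ∉ B)

lemma gadget_verts : (gadget a b A B).verts = {a, b} ∪ A ∪ B := rfl

include hab haA hbA haB hbB in
lemma gadget_adj_iff {x y : V} : (gadget a b A B).Adj x y ↔ gadgetAdj a b A B x y := by
  constructor
  · exact And.right
  · intro h
    refine ⟨?_, h⟩
    rcases h with ⟨rfl, rfl⟩ | ⟨rfl, rfl⟩ | ⟨rfl, hy⟩ | ⟨rfl, hx⟩ | ⟨rfl, hy⟩ | ⟨rfl, hx⟩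
    · exact hab
    · exact hab.symm
    · exact fun h => haA (h ▸ hy)
    · exact fun h => haA (h.symm ▸ hx)
    · exact fun h => hbB (h ▸ hy)
    · exact fun h => hbB (h.symm ▸ hx)

include haA hbA haB hbB hAB in
lemma gadget_internal {v : V}
    (h : ∃ x y, x ≠ y ∧ (gadget a b A B).Adj v x ∧ (gadget a b A B).Adj v y) :
    v = a ∨ v = b := by
  by_contra hcon
  push_neg at hcon
  obtain ⟨hva, hvb⟩ := hcon
  obtain ⟨x, y, hxy, hx, hy⟩ := h
  have key : ∀ z, (gadget a b A B).Adj v z → (v ∈ A ∧ z = a) ∨ (v ∈ B ∧ z = b) := by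
    intro z hz
    rcases hz.2 with ⟨h1, h2⟩ | ⟨h1, h2⟩ | ⟨h1, h2⟩ | ⟨h1, h2⟩ | ⟨h1, h2⟩ | ⟨h1, h2⟩
    · exact absurd h1 hva
    · exact absurd h1 hvb
    · exact absurd h1 hva
    · exact Or.inl ⟨h2, h1⟩
    · exact absurd h1 hvb
    · exact Or.inr ⟨h2, h1⟩
  rcases key x hx with ⟨hvA, rfl⟩ | ⟨hvB, rfl⟩ <;>
    rcases key y hy with ⟨hvA', rfl⟩ | ⟨hvB', rfl⟩
  · exact hxy rfl
  · exact hAB _ hvA hvB'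
  · exact hAB _ hvA' hvB
  · exact hxy rfl

lemma gadget_mem_a : a ∈ (gadget a b A B).verts := by simp [gadget_verts]

include hab haA hbA haB hbB in
lemma gadget_connected : (gadget a b A B).coe.Connected := by
  have ha : a ∈ (gadget a b A B).verts := by simp [gadget_verts]
  rw [SimpleGraph.connected_iff]
  constructor
  · intro x y
    have reach : ∀ z : (gadget a b A B).verts,
        (gadget a b A B).coe.Reachable z ⟨a, ha⟩ := by
      rintro ⟨z, hz⟩
      rcases hz with (hz | hz) | hz
      · rcases hz with rfl | rfl
        · rfl
        · exact SimpleGraph.Adj.reachable (by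
            simp only [Subgraph.coe_adj]
            exact ((gadget_adj_iff hab haA hbA haB hbB).mpr (Or.inr (Or.inl ⟨rfl, rfl⟩))))
      · exact SimpleGraph.Adj.reachable (by
          simp only [Subgraph.coe_adj]
          exact ((gadget_adj_iff hab haA hbA haB hbB).mpr
            (Or.inr (Or.inr (Or.inr (Or.inl ⟨rfl, hz⟩))))))
      · have hb : b ∈ (gadget a b A B).verts := by simp [gadget_verts]
        have step1 : (gadget a b A B).coe.Reachable ⟨z, by simp [gadget_verts, hz]⟩ ⟨b, hb⟩ :=
          SimpleGraph.Adj.reachable (by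
            simp only [Subgraph.coe_adj]
            exact ((gadget_adj_iff hab haA hbA haB hbB).mpr
              (Or.inr (Or.inr (Or.inr (Or.inr (Or.inr ⟨rfl, hz⟩)))))))
        have step2 : (gadget a b A B).coe.Reachable ⟨b, hb⟩ ⟨a, ha⟩ :=
          SimpleGraph.Adj.reachable (by
            simp only [Subgraph.coe_adj]
            exact ((gadget_adj_iff hab haA hbA haB hbB).mpr (Or.inr (Or.inl ⟨rfl, rfl⟩))))
        exact step1.trans step2
    exact (reach x).trans (reach y).symm
  · exact ⟨⟨a, ha⟩⟩

include hab haA hbA haB hbB hAB in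
lemma gadget_isTree : (gadget a b A B).coe.IsTree := by
  have ha : a ∈ (gadget a b A B).verts := by simp [gadget_verts]
  have hb : b ∈ (gadget a b A B).verts := by simp [gadget_verts]
  refine ⟨gadget_connected hab haA hbA haB hbB, ?_⟩
  apply acyclic_of_two_internal (⟨a, ha⟩ : (gadget a b A B).verts) ⟨b, hb⟩
  rintro ⟨v, hv⟩ ⟨⟨x, hx⟩, ⟨y, hy⟩, hxy, h1, h2⟩
  simp only [Subgraph.coe_adj] at h1 h2
  have : v = a ∨ v = b := by
    apply gadget_internal haA hbA haB hbB hAB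
    exact ⟨x, y, fun h => hxy (Subtype.ext h), h1, h2⟩
  rcases this with rfl | rfl
  · exact Or.inl rfl
  · exact Or.inr rfl

end gadget

lemma gadget_adj_def {V : Type*} {a b : V} {A B : Set V} {x y : V} :
    (gadget a b A B).Adj x y ↔ x ≠ y ∧ gadgetAdj a b A B x y := Iff.rfl

section construction

variable {n : ℕ} (S : Set (Fin n)) (s : ℕ) (f g : ℕ → Fin n)

/-- attach rule: leaf `m` is attached to centre `2j` iff this holds. -/
def att (j m : ℕ) : Prop := (m + if m < 2*j then 1 else 0) % 2 = 0

def rel (j m m' : ℕ) : Prop :=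
  (m = 2*j ∧ m' = 2*j+1) ∨ (m = 2*j+1 ∧ m' = 2*j) ∨
  (m = 2*j ∧ m' ≠ 2*j ∧ m' ≠ 2*j+1 ∧ att j m') ∨
  (m' = 2*j ∧ m ≠ 2*j ∧ m ≠ 2*j+1 ∧ att j m) ∨
  (m = 2*j+1 ∧ m' ≠ 2*j ∧ m' ≠ 2*j+1 ∧ ¬ att j m') ∨
  (m' = 2*j+1 ∧ m ≠ 2*j ∧ m ≠ 2*j+1 ∧ ¬ att j m)

lemma rel_disjoint {j j' m m' : ℕ} (hjj : j ≠ j')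
    (h1 : rel j m m') (h2 : rel j' m m') : False := by
  unfold rel att at h1 h2
  rcases h1 with ⟨e1, e2⟩ | ⟨e1, e2⟩ | ⟨e1, e2, e3, e4⟩ | ⟨e1, e2, e3, e4⟩ |
      ⟨e1, e2, e3, e4⟩ | ⟨e1, e2, e3, e4⟩ <;>
    rcases h2 with ⟨d1, d2⟩ | ⟨d1, d2⟩ | ⟨d1, d2, d3, d4⟩ | ⟨d1, d2, d3, d4⟩ |
      ⟨d1, d2, d3, d4⟩ | ⟨d1, d2, d3, d4⟩ <;>
    (try split_ifs at *) <;> omega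

/-- The star tree centred at the external vertex `g i` with leaves `S`. -/
def starT (i : ℕ) : (⊤ : SimpleGraph (Fin n)).Subgraph :=
  gadget (g i) (f 0) (S \ {f 0}) ∅

/-- The double star tree with centres `f (2j)`, `f (2j+1)`. -/
def dstarT (j : ℕ) : (⊤ : SimpleGraph (Fin n)).Subgraph :=
  gadget (f (2*j)) (f (2*j+1))
    (f '' {m | m < s ∧ m ≠ 2*j ∧ m ≠ 2*j+1 ∧ att j m})
    (f '' {m | m < s ∧ m ≠ 2*j ∧ m ≠ 2*j+1 ∧ ¬ att j m})

variable {S s f g}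

section star

variable {i : ℕ} (hs : 2 ≤ s) (hf : ∀ m, m < s → f m ∈ S)
  (hfi : ∀ m m', m < s → m' < s → f m = f m' → m = m') (hgS : g i ∉ S)

include hs hf hgS

lemma star_hab : g i ≠ f 0 := fun h => hgS (h ▸ hf 0 (by omega))

lemma star_haA : g i ∉ S \ {f 0} := fun h => hgS h.1

lemma star_adj {x y : Fin n} (hx : (starT S f g i).Adj x y) :
    (x = g i ∧ y ∈ S) ∨ (y = g i ∧ x ∈ S) := by
  obtain ⟨-, h⟩ := hx
  rcases h with ⟨rfl, rfl⟩ | ⟨rfl, rfl⟩ | ⟨rfl, hy⟩ | ⟨rfl, hx⟩ | ⟨-, hy⟩ | ⟨-, hx⟩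
  · exact Or.inl ⟨rfl, hf 0 (by omega)⟩
  · exact Or.inr ⟨rfl, hf 0 (by omega)⟩
  · exact Or.inl ⟨rfl, hy.1⟩
  · exact Or.inr ⟨rfl, hx.1⟩
  · exact absurd hy (Set.notMem_empty _)
  · exact absurd hx (Set.notMem_empty _)

lemma star_verts : (starT S f g i).verts = {g i} ∪ S := by
  have hf0 : f 0 ∈ S := hf 0 (by omega)
  ext x
  simp only [starT, gadget_verts, Set.union_empty, Set.mem_union, Set.mem_insert_iff,
    Set.mem_singleton_iff, Set.mem_diff]
  constructor
  · rintro ((rfl | rfl) | ⟨hx, -⟩)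
    · exact Or.inl rfl
    · exact Or.inr hf0
    · exact Or.inr hx
  · rintro (rfl | hx)
    · exact Or.inl (Or.inl rfl)
    · by_cases hx0 : x = f 0
      · exact Or.inl (Or.inr hx0)
      · exact Or.inr ⟨hx, hx0⟩

lemma star_internal {v : Fin n}
    (h : ∃ x y, x ≠ y ∧ (starT S f g i).Adj v x ∧ (starT S f g i).Adj v y) :
    v = g i := by
  rcases gadget_internal (star_haA hs hf hgS) (by simp) (Set.notMem_empty _)
    (Set.notMem_empty _) (fun x _ hx => Set.notMem_empty x hx) h with rfl | rfl
  · rfl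
  · exfalso
    obtain ⟨x, y, hxy, hx, hy⟩ := h
    have key : ∀ z, (starT S f g i).Adj (f 0) z → z = g i := by
      intro z hz
      obtain ⟨-, h⟩ := hz
      rcases h with ⟨h1, -⟩ | ⟨-, rfl⟩ | ⟨h1, -⟩ | ⟨rfl, h2⟩ | ⟨-, h2⟩ | ⟨-, h2⟩
      · exact absurd h1.symm (star_hab hs hf hgS)
      · rfl
      · exact absurd h1.symm (star_hab hs hf hgS)
      · exact absurd h2 (by simp)
      · exact absurd h2 (Set.notMem_empty _)
      · exact absurd h2 (Set.notMem_empty _)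
    exact hxy ((key x hx).trans (key y hy).symm)

include hfi in
lemma star_steiner : (⊤ : SimpleGraph (Fin n)).IsSteinerTree S (starT S f g i) := by
  have hab := star_hab hs hf hgS
  have haA := star_haA hs hf hgS
  have hbA : f 0 ∉ S \ {f 0} := by simp
  refine ⟨gadget_isTree hab haA hbA (Set.notMem_empty _) (Set.notMem_empty _)
    (fun x _ hx => Set.notMem_empty x hx), ?_, ?_⟩
  · rw [star_verts hs hf hgS]
    exact Set.subset_union_right
  · intro v hv hni
    rw [star_verts hs hf hgS] at hv
    rcases hv with rfl | hv
    · exfalso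
      apply hni
      have hf1 : f 1 ∈ S \ {f 0} := by
        refine ⟨hf 1 (by omega), ?_⟩
        simp only [Set.mem_singleton_iff]
        intro h
        exact absurd (hfi 1 0 (by omega) (by omega) h) (by omega)
      refine ⟨f 0, f 1, ?_, ⟨hab, Or.inl ⟨rfl, rfl⟩⟩,
        ⟨fun h => hgS (h ▸ hf1.1), Or.inr (Or.inr (Or.inl ⟨rfl, hf1⟩))⟩⟩
      intro h
      exact absurd (hfi 0 1 (by omega) (by omega) h) (by omega)
    · exact hv

end star

section dstar

variable {j : ℕ} (h2j : 2*j+1 < s) (hf : ∀ m, m < s → f m ∈ S)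
  (hfi : ∀ m m', m < s → m' < s → f m = f m' → m = m')
  (hfs : ∀ x ∈ S, ∃ m, m < s ∧ x = f m)

include h2j hfi

lemma dstar_hab : f (2*j) ≠ f (2*j+1) := fun h =>
  absurd (hfi _ _ (by omega) (by omega) h) (by omega)

lemma dstar_haA : f (2*j) ∉ f '' {m | m < s ∧ m ≠ 2*j ∧ m ≠ 2*j+1 ∧ att j m} := by
  rintro ⟨m, ⟨hm, hm1, -, -⟩, he⟩
  exact hm1 (hfi m (2*j) hm (by omega) he)

lemma dstar_hbA : f (2*j+1) ∉ f '' {m | m < s ∧ m ≠ 2*j ∧ m ≠ 2*j+1 ∧ att j m} := by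
  rintro ⟨m, ⟨hm, -, hm2, -⟩, he⟩
  exact hm2 (hfi m (2*j+1) hm (by omega) he)

lemma dstar_haB : f (2*j) ∉ f '' {m | m < s ∧ m ≠ 2*j ∧ m ≠ 2*j+1 ∧ ¬ att j m} := by
  rintro ⟨m, ⟨hm, hm1, -, -⟩, he⟩
  exact hm1 (hfi m (2*j) hm (by omega) he)

lemma dstar_hbB : f (2*j+1) ∉ f '' {m | m < s ∧ m ≠ 2*j ∧ m ≠ 2*j+1 ∧ ¬ att j m} := by
  rintro ⟨m, ⟨hm, -, hm2, -⟩, he⟩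
  exact hm2 (hfi m (2*j+1) hm (by omega) he)

lemma dstar_hAB : ∀ x ∈ f '' {m | m < s ∧ m ≠ 2*j ∧ m ≠ 2*j+1 ∧ att j m},
    x ∉ f '' {m | m < s ∧ m ≠ 2*j ∧ m ≠ 2*j+1 ∧ ¬ att j m} := by
  rintro x ⟨m, ⟨hm, -, -, hatt⟩, rfl⟩ ⟨m', ⟨hm', -, -, hnatt⟩, he⟩
  exact hnatt (hfi m' m hm' hm he ▸ hatt)

include hf hfs in
lemma dstar_verts : (dstarT s f j).verts = S := by
  ext x
  simp only [dstarT, gadget_verts, Set.mem_union, Set.mem_insert_iff, Set.mem_singleton_iff]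
  constructor
  · rintro (((rfl | rfl) | ⟨m, ⟨hm, -⟩, rfl⟩) | ⟨m, ⟨hm, -⟩, rfl⟩)
    · exact hf _ (by omega)
    · exact hf _ (by omega)
    · exact hf _ hm
    · exact hf _ hm
  · intro hx
    obtain ⟨m, hm, rfl⟩ := hfs x hx
    by_cases h1 : m = 2*j
    · exact Or.inl (Or.inl (Or.inl (by rw [h1])))
    by_cases h2 : m = 2*j+1
    · exact Or.inl (Or.inl (Or.inr (by rw [h2])))
    by_cases h3 : att j m
    · exact Or.inl (Or.inr ⟨m, ⟨hm, h1, h2, h3⟩, rfl⟩)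
    · exact Or.inr ⟨m, ⟨hm, h1, h2, h3⟩, rfl⟩

lemma dstar_adj {x y : Fin n} (hx : (dstarT s f j).Adj x y) :
    ∃ m m', m < s ∧ m' < s ∧ x = f m ∧ y = f m' ∧ rel j m m' := by
  obtain ⟨-, h⟩ := hx
  rcases h with ⟨rfl, rfl⟩ | ⟨rfl, rfl⟩ | ⟨rfl, ⟨m', ⟨hm', h1, h2, h3⟩, rfl⟩⟩ |
    ⟨rfl, ⟨m, ⟨hm, h1, h2, h3⟩, rfl⟩⟩ | ⟨rfl, ⟨m', ⟨hm', h1, h2, h3⟩, rfl⟩⟩ |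
    ⟨rfl, ⟨m, ⟨hm, h1, h2, h3⟩, rfl⟩⟩
  · exact ⟨2*j, 2*j+1, by omega, by omega, rfl, rfl, Or.inl ⟨rfl, rfl⟩⟩
  · exact ⟨2*j+1, 2*j, by omega, by omega, rfl, rfl, Or.inr (Or.inl ⟨rfl, rfl⟩)⟩
  · exact ⟨2*j, m', by omega, hm', rfl, rfl, Or.inr (Or.inr (Or.inl ⟨rfl, h1, h2, h3⟩))⟩
  · exact ⟨m, 2*j, hm, by omega, rfl, rfl,
      Or.inr (Or.inr (Or.inr (Or.inl ⟨rfl, h1, h2, h3⟩)))⟩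
  · exact ⟨2*j+1, m', by omega, hm', rfl, rfl,
      Or.inr (Or.inr (Or.inr (Or.inr (Or.inl ⟨rfl, h1, h2, h3⟩))))⟩
  · exact ⟨m, 2*j+1, hm, by omega, rfl, rfl,
      Or.inr (Or.inr (Or.inr (Or.inr (Or.inr ⟨rfl, h1, h2, h3⟩))))⟩

lemma dstar_internal {v : Fin n}
    (h : ∃ x y, x ≠ y ∧ (dstarT s f j).Adj v x ∧ (dstarT s f j).Adj v y) :
    v = f (2*j) ∨ v = f (2*j+1) :=
  gadget_internal (dstar_haA h2j hfi) (dstar_hbA h2j hfi) (dstar_haB h2j hfi)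
    (dstar_hbB h2j hfi) (dstar_hAB h2j hfi) h

include hf hfs in
lemma dstar_steiner : (⊤ : SimpleGraph (Fin n)).IsSteinerTree S (dstarT s f j) := by
  refine ⟨gadget_isTree (dstar_hab h2j hfi) (dstar_haA h2j hfi) (dstar_hbA h2j hfi)
    (dstar_haB h2j hfi) (dstar_hbB h2j hfi) (dstar_hAB h2j hfi), ?_, ?_⟩
  · rw [dstar_verts h2j hf hfi hfs]
  · intro v hv _
    rwa [dstar_verts h2j hf hfi hfs] at hv

end dstar

section pairwise

variable (hs : 2 ≤ s) (hf : ∀ m, m < s → f m ∈ S)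
  (hfi : ∀ m m', m < s → m' < s → f m = f m' → m = m')
  (hfs : ∀ x ∈ S, ∃ m, m < s ∧ x = f m)
  (hg : ∀ i, i < n - s → g i ∉ S)
  (hgi : ∀ i i', i < n - s → i' < n - s → g i = g i' → i = i')

include hs hf hg hgi

lemma star_star_edge {i i' : ℕ} (hi : i < n - s) (hi' : i' < n - s) (hii : i ≠ i') :
    ∀ x y, (starT S f g i).Adj x y → (starT S f g i').Adj x y → False := by
  intro x y h1 h2
  rcases star_adj hs hf (hg i hi) h1 with ⟨rfl, hy⟩ | ⟨rfl, hx⟩ <;>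
    rcases star_adj hs hf (hg i' hi') h2 with ⟨he, hy'⟩ | ⟨he, hx'⟩
  · exact hii (hgi i i' hi hi' he)
  · exact hg i' hi' (he ▸ hy)
  · exact hg i' hi' (he ▸ hx)
  · exact hii (hgi i i' hi hi' he)

include hfi hgi in
lemma star_dstar_edge {i j : ℕ} (hi : i < n - s) (h2j : 2*j+1 < s) :
    ∀ x y, (starT S f g i).Adj x y → (dstarT s f j).Adj x y → False := by
  intro x y h1 h2
  obtain ⟨m, m', hm, hm', rfl, rfl, -⟩ := dstar_adj h2j hfi h2
  rcases star_adj hs hf (hg i hi) h1 with ⟨he, -⟩ | ⟨he, -⟩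
  · exact hg i hi (he ▸ hf m hm)
  · exact hg i hi (he ▸ hf m' hm')

lemma star_star_verts {i i' : ℕ} (hi : i < n - s) (hi' : i' < n - s) (hii : i ≠ i') :
    (starT S f g i).verts ∩ (starT S f g i').verts = S := by
  rw [star_verts hs hf (hg i hi), star_verts hs hf (hg i' hi')]
  ext x
  simp only [Set.mem_inter_iff, Set.mem_union, Set.mem_singleton_iff]
  constructor
  · rintro ⟨rfl | hx, h2⟩
    · rcases h2 with he | hx'
      · exact absurd (hgi i i' hi hi' he) hii
      · exact hx'
    · exact hx
  · exact fun hx => ⟨Or.inr hx, Or.inr hx⟩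

include hfi hfs in
lemma star_dstar_verts {i j : ℕ} (hi : i < n - s) (h2j : 2*j+1 < s) :
    (starT S f g i).verts ∩ (dstarT s f j).verts = S := by
  rw [star_verts hs hf (hg i hi), dstar_verts h2j hf hfi hfs]
  ext x
  simp only [Set.mem_inter_iff, Set.mem_union, Set.mem_singleton_iff]
  constructor
  · rintro ⟨-, h2⟩
    exact h2
  · exact fun hx => ⟨Or.inr hx, hx⟩

lemma star_star_int {i i' : ℕ} (hi : i < n - s) (hi' : i' < n - s) (hii : i ≠ i') :
    ∀ v, (∃ a b, a ≠ b ∧ (starT S f g i).Adj v a ∧ (starT S f g i).Adj v b) →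
      (∃ a b, a ≠ b ∧ (starT S f g i').Adj v a ∧ (starT S f g i').Adj v b) → False := by
  intro v h1 h2
  have e1 := star_internal hs hf (hg i hi) h1
  have e2 := star_internal hs hf (hg i' hi') h2
  exact hii (hgi i i' hi hi' (e1 ▸ e2))

include hfi hgi in
lemma star_dstar_int {i j : ℕ} (hi : i < n - s) (h2j : 2*j+1 < s) :
    ∀ v, (∃ a b, a ≠ b ∧ (starT S f g i).Adj v a ∧ (starT S f g i).Adj v b) →
      (∃ a b, a ≠ b ∧ (dstarT s f j).Adj v a ∧ (dstarT s f j).Adj v b) → False := by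
  intro v h1 h2
  have e1 := star_internal hs hf (hg i hi) h1
  rcases dstar_internal h2j hfi h2 with e2 | e2
  · exact hg i hi (e1 ▸ e2 ▸ hf (2*j) (by omega))
  · exact hg i hi (e1 ▸ e2 ▸ hf (2*j+1) (by omega))

omit hs hf hg hgi

include hfi in
lemma dstar_dstar_edge {j j' : ℕ} (h2j : 2*j+1 < s) (h2j' : 2*j'+1 < s) (hjj : j ≠ j') :
    ∀ x y, (dstarT s f j).Adj x y → (dstarT s f j').Adj x y → False := by
  intro x y h1 h2
  obtain ⟨m1, m1', hm1, hm1', he1, he1', hr1⟩ := dstar_adj h2j hfi h1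
  obtain ⟨m2, m2', hm2, hm2', he2, he2', hr2⟩ := dstar_adj h2j' hfi h2
  have em : m1 = m2 := hfi _ _ hm1 hm2 (he1 ▸ he2 ▸ rfl)
  have em' : m1' = m2' := hfi _ _ hm1' hm2' (he1' ▸ he2' ▸ rfl)
  exact rel_disjoint hjj hr1 (em ▸ em' ▸ hr2)

include hf hfi hfs in
lemma dstar_dstar_verts {j j' : ℕ} (h2j : 2*j+1 < s) (h2j' : 2*j'+1 < s) :
    (dstarT s f j).verts ∩ (dstarT s f j').verts = S := by
  rw [dstar_verts h2j hf hfi hfs, dstar_verts h2j' hf hfi hfs, Set.inter_self]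

include hfi in
lemma dstar_dstar_int {j j' : ℕ} (h2j : 2*j+1 < s) (h2j' : 2*j'+1 < s) (hjj : j ≠ j') :
    ∀ v, (∃ a b, a ≠ b ∧ (dstarT s f j).Adj v a ∧ (dstarT s f j).Adj v b) →
      (∃ a b, a ≠ b ∧ (dstarT s f j').Adj v a ∧ (dstarT s f j').Adj v b) → False := by
  intro v h1 h2
  rcases dstar_internal h2j hfi h1 with e1 | e1 <;>
    rcases dstar_internal h2j' hfi h2 with e2 | e2 <;>
  · have := hfi _ _ (by omega) (by omega) (e1 ▸ e2 : f _ = f _)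
    omega

end pairwise

end construction

end SteinerAux

theorem stmt_5 (n s : ℕ) (hn : 4 ≤ n) (hs : 2 ≤ s) (hsn : s ≤ n)
    (S : Set (Fin n)) (hS : S.ncard = s) :
    ∃ Ts : Fin (n - (s + 1) / 2) → (⊤ : SimpleGraph (Fin n)).Subgraph,
      (∀ i, (⊤ : SimpleGraph (Fin n)).IsSteinerTree S (Ts i)) ∧
      (⊤ : SimpleGraph (Fin n)).CompletelyIndependent S Ts := by
  classical
  -- enumerate `S` by `f` and its complement by `g`
  haveI : Fintype S := S.toFinite.fintype
  have hcardS : Fintype.card S = s := by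
    rw [← Set.toFinset_card, ← Set.ncard_eq_toFinset_card' S, hS]
  haveI : Fintype (↥Sᶜ) := Fintype.ofFinite _
  have hcardSc : Fintype.card (↥Sᶜ) = n - s := by
    rw [Fintype.card_compl_set, hcardS, Fintype.card_fin]
  let σ : S ≃ Fin s := Fintype.equivFinOfCardEq hcardS
  let τ : (↥Sᶜ) ≃ Fin (n - s) := Fintype.equivFinOfCardEq hcardSc
  have hs0 : 0 < s := by omega
  set f : ℕ → Fin n := fun m => if h : m < s then (σ.symm ⟨m, h⟩ : Fin n)
    else (σ.symm ⟨0, hs0⟩ : Fin n) with hfdef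
  set g : ℕ → Fin n := fun i => if h : i < n - s then (τ.symm ⟨i, h⟩ : Fin n)
    else f 0 with hgdef
  have hf : ∀ m, m < s → f m ∈ S := by
    intro m hm
    simp only [hfdef, dif_pos hm]
    exact (σ.symm ⟨m, hm⟩).2
  have hfi : ∀ m m', m < s → m' < s → f m = f m' → m = m' := by
    intro m m' hm hm' he
    simp only [hfdef, dif_pos hm, dif_pos hm'] at he
    have := σ.symm.injective (Subtype.ext he)
    simpa [Fin.ext_iff] using this
  have hfs : ∀ x ∈ S, ∃ m, m < s ∧ x = f m := by
    intro x hx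
    refine ⟨(σ ⟨x, hx⟩ : Fin s), (σ ⟨x, hx⟩).isLt, ?_⟩
    simp only [hfdef, dif_pos (σ ⟨x, hx⟩).isLt]
    rw [show (⟨((σ ⟨x, hx⟩ : Fin s) : ℕ), (σ ⟨x, hx⟩).isLt⟩ : Fin s) = σ ⟨x, hx⟩ from
      Fin.eta _ _]
    rw [Equiv.symm_apply_apply]
  have hg : ∀ i, i < n - s → g i ∉ S := by
    intro i hi
    simp only [hgdef, dif_pos hi]
    exact (τ.symm ⟨i, hi⟩).2
  have hgi : ∀ i i', i < n - s → i' < n - s → g i = g i' → i = i' := by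
    intro i i' hi hi' he
    simp only [hgdef, dif_pos hi, dif_pos hi'] at he
    have := τ.symm.injective (Subtype.ext he)
    simpa [Fin.ext_iff] using this
  -- bounds
  have hbound : ∀ i : Fin (n - (s + 1) / 2), ¬ ((i : ℕ) < n - s) →
      2 * ((i : ℕ) - (n - s)) + 1 < s := by
    intro i hi
    have := i.isLt
    omega
  refine ⟨fun i => if (i : ℕ) < n - s then SteinerAux.starT S f g (i : ℕ)
    else SteinerAux.dstarT s f ((i : ℕ) - (n - s)), ?_, ?_⟩
  · intro i
    by_cases hp : (i : ℕ) < n - s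
    · simp only [if_pos hp]
      exact SteinerAux.star_steiner hs hf hfi (hg _ hp)
    · simp only [if_neg hp]
      exact SteinerAux.dstar_steiner (hbound i hp) hf hfi hfs
  · apply SteinerAux.ci_of
    · -- edge disjointness
      intro p q hpq
      have hne : (p : ℕ) ≠ (q : ℕ) := fun h => hpq (Fin.val_injective h)
      by_cases hp : (p : ℕ) < n - s <;> by_cases hq : (q : ℕ) < n - s
      · simp only [if_pos hp, if_pos hq]
        exact SteinerAux.edge_disjoint_of
          (SteinerAux.star_star_edge hs hf hg hgi hp hq hne)
      · simp only [if_pos hp, if_neg hq]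
        exact SteinerAux.edge_disjoint_of
          (SteinerAux.star_dstar_edge hs hf hfi hg hgi hp (hbound q hq))
      · simp only [if_neg hp, if_pos hq]
        exact SteinerAux.edge_disjoint_of (fun x y h1 h2 =>
          SteinerAux.star_dstar_edge hs hf hfi hg hgi hq (hbound p hp) x y h2 h1)
      · simp only [if_neg hp, if_neg hq]
        exact SteinerAux.edge_disjoint_of
          (SteinerAux.dstar_dstar_edge hfi (hbound p hp) (hbound q hq) (by omega))
    · -- vertex intersections
      intro p q hpq
      have hne : (p : ℕ) ≠ (q : ℕ) := fun h => hpq (Fin.val_injective h)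
      by_cases hp : (p : ℕ) < n - s <;> by_cases hq : (q : ℕ) < n - s
      · simp only [if_pos hp, if_pos hq]
        exact SteinerAux.star_star_verts hs hf hg hgi hp hq hne
      · simp only [if_pos hp, if_neg hq]
        exact SteinerAux.star_dstar_verts hs hf hfi hfs hg hgi hp (hbound q hq)
      · simp only [if_neg hp, if_pos hq]
        rw [Set.inter_comm]
        exact SteinerAux.star_dstar_verts hs hf hfi hfs hg hgi hq (hbound p hp)
      · simp only [if_neg hp, if_neg hq]
        exact SteinerAux.dstar_dstar_verts hf hfi hfs (hbound p hp) (hbound q hq)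
    · -- internal vertices
      intro p q hpq v
      have hne : (p : ℕ) ≠ (q : ℕ) := fun h => hpq (Fin.val_injective h)
      by_cases hp : (p : ℕ) < n - s <;> by_cases hq : (q : ℕ) < n - s
      · simp only [if_pos hp, if_pos hq]
        exact SteinerAux.star_star_int hs hf hg hgi hp hq hne v
      · simp only [if_pos hp, if_neg hq]
        exact SteinerAux.star_dstar_int hs hf hfi hg hgi hp (hbound q hq) v
      · simp only [if_neg hp, if_pos hq]
        exact fun h1 h2 =>
          SteinerAux.star_dstar_int hs hf hfi hg hgi hq (hbound p hp) v h2 h1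
      · simp only [if_neg hp, if_neg hq]
        exact SteinerAux.dstar_dstar_int hfi (hbound p hp) (hbound q hq) (by omega) v
end

section
/- For integers n and s with 2 ≤ s ≤ n and n ≥ 4, the generalized s*-connectivity of the complete graph satisfies κ*_s(K_n) = n − ⌈s/2⌉. -/
open SimpleGraph

section helpers
section walkhelpers
variable {V : Type*} {G : SimpleGraph V}

/-- every vertex on a cycle has two distinct neighbours -/
lemma cycle_two_nbrs [DecidableEq V] {v u : V} (c : G.Walk v v) (hc : c.IsCycle)
    (hu : u ∈ c.support) :
    ∃ a b, a ≠ b ∧ G.Adj u a ∧ G.Adj u b := by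
  have hc' : (c.rotate u hu).IsCycle := hc.rotate hu
  generalize (c.rotate u hu) = c' at hc'
  cases c' with
  | nil => exact absurd hc' Walk.IsCycle.not_of_nil
  | cons h p =>
    rename_i w
    have hpnil : ¬ p.reverse.Nil := by
      rw [Walk.not_nil_iff_lt_length, Walk.length_reverse]
      have h3 := hc'.three_le_length
      simp only [Walk.length_cons] at h3
      omega
    obtain ⟨w2, h2, q, hq⟩ := Walk.not_nil_iff.mp hpnil
    refine ⟨w, w2, ?_, h, h2⟩
    intro hww
    subst hww
    have hmem : s(u, w) ∈ p.edges := by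
      have : s(u, w) ∈ p.reverse.edges := by rw [hq]; simp
      rwa [Walk.edges_reverse, List.mem_reverse] at this
    have := (Walk.isTrail_cons h p).mp hc'.isTrail
    exact this.2 hmem

/-- an internal vertex of a path has two distinct neighbours among the path's edges -/
lemma path_internal_two_nbrs {x y : V} (P : G.Walk x y) (hP : P.IsPath) (v : V)
    (hv : v ∈ P.support) (hvx : v ≠ x) (hvy : v ≠ y) :
    ∃ a b, a ≠ b ∧ s(v, a) ∈ P.edges ∧ s(v, b) ∈ P.edges := by
  induction P with
  | nil => simp at hv; exact absurd hv hvx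
  | cons h p ih =>
    rename_i u w _
    rw [Walk.support_cons, List.mem_cons] at hv
    have hP' := ((Walk.cons_isPath_iff h p).mp hP).1
    rcases hv with rfl | hv
    · exact absurd rfl hvx
    · by_cases hvw : v = w
      · subst hvw
        have hpnil : ¬ p.Nil := Walk.not_nil_of_ne hvy
        obtain ⟨w2, h2, q, hq⟩ := Walk.not_nil_iff.mp hpnil
        refine ⟨u, w2, ?_, by simp [Sym2.eq_swap], by rw [hq]; simp⟩
        intro huw2
        subst huw2
        have : u ∈ p.support := by rw [hq]; simp
        exact ((Walk.cons_isPath_iff h p).mp hP).2 this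
      · obtain ⟨a, b, hab, ha, hb⟩ := ih hP' hv hvw hvy
        exact ⟨a, b, hab, by simp [ha], by simp [hb]⟩

end walkhelpers

variable {V : Type*}

/-- double star subgraph of the complete graph: centres `a b`, leaves `L`, attachment `f` -/
def DS (a b : V) (L : Set V) (f : V → V) : (⊤ : SimpleGraph V).Subgraph where
  verts := L ∪ {a, b}
  Adj u v := u ≠ v ∧ ((u = a ∧ v = b) ∨ (u = b ∧ v = a) ∨
    (u ∈ L ∧ v = f u ∧ (f u = a ∨ f u = b)) ∨ (v ∈ L ∧ u = f v ∧ (f v = a ∨ f v = b)))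
  adj_sub := fun h => h.1
  edge_vert := fun h => by
    rcases h.2 with ⟨rfl, _⟩ | ⟨rfl, _⟩ | ⟨hL, _⟩ | ⟨hL, rfl, hfv⟩
    · exact Or.inr (by simp)
    · exact Or.inr (by simp)
    · exact Or.inl hL
    · rcases hfv with h | h <;> exact Or.inr (by simp [h])
  symm := ⟨fun u v h => ⟨h.1.symm, by tauto⟩⟩

variable {a b : V} {L : Set V} {f : V → V}

lemma DS_verts : (DS a b L f).verts = L ∪ {a, b} := rfl

lemma DS_adj {u v : V} : (DS a b L f).Adj u v ↔ u ≠ v ∧ ((u = a ∧ v = b) ∨ (u = b ∧ v = a) ∨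
    (u ∈ L ∧ v = f u ∧ (f u = a ∨ f u = b)) ∨ (v ∈ L ∧ u = f v ∧ (f v = a ∨ f v = b))) :=
  Iff.rfl

lemma DS_nbr_unique (hv : v ≠ a) (hv' : v ≠ b) {y z : V}
    (hy : (DS a b L f).Adj v y) (hz : (DS a b L f).Adj v z) : y = z := by
  rcases hy.2 with ⟨h, _⟩ | ⟨h, _⟩ | ⟨_, rfl, _⟩ | ⟨_, h, hh⟩
  · exact absurd h hv
  · exact absurd h hv'
  · rcases hz.2 with ⟨h, _⟩ | ⟨h, _⟩ | ⟨_, rfl, _⟩ | ⟨_, h, hh⟩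
    · exact absurd h hv
    · exact absurd h hv'
    · rfl
    · rcases hh with hh | hh <;> [exact absurd (h.trans hh) hv; exact absurd (h.trans hh) hv']
  · rcases hh with hh | hh <;> [exact absurd (h.trans hh) hv; exact absurd (h.trans hh) hv']

lemma DS_mem_edgeSet (hab : a ≠ b) (haL : a ∉ L) (hbL : b ∉ L)
    (hf : ∀ v ∈ L, f v = a ∨ f v = b) {e : Sym2 V} :
    e ∈ (DS a b L f).edgeSet ↔ e = s(a, b) ∨ ∃ v ∈ L, e = s(v, f v) := by
  refine e.ind (fun u v => ?_)
  rw [Subgraph.mem_edgeSet, DS_adj]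
  constructor
  · rintro ⟨hne, ⟨rfl, rfl⟩ | ⟨rfl, rfl⟩ | ⟨hL, rfl, _⟩ | ⟨hL, rfl, _⟩⟩
    · exact Or.inl rfl
    · exact Or.inl (Sym2.eq_swap)
    · exact Or.inr ⟨u, hL, rfl⟩
    · exact Or.inr ⟨v, hL, Sym2.eq_swap⟩
  · rintro (h | ⟨w, hw, h⟩)
    · rw [Sym2.eq_iff] at h
      rcases h with ⟨rfl, rfl⟩ | ⟨rfl, rfl⟩
      · exact ⟨hab, Or.inl ⟨rfl, rfl⟩⟩
      · exact ⟨hab.symm, Or.inr (Or.inl ⟨rfl, rfl⟩)⟩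
    · have hfw := hf w hw
      have hne : w ≠ f w := by
        intro hwe
        rcases hfw with h | h
        · exact haL ((hwe.trans h) ▸ hw)
        · exact hbL ((hwe.trans h) ▸ hw)
      rw [Sym2.eq_iff] at h
      rcases h with ⟨rfl, rfl⟩ | ⟨rfl, rfl⟩
      · exact ⟨hne, Or.inr (Or.inr (Or.inl ⟨hw, rfl, hfw⟩))⟩
      · exact ⟨hne.symm, Or.inr (Or.inr (Or.inr ⟨hw, rfl, hfw⟩))⟩

lemma DS_isTree [DecidableEq V] (hab : a ≠ b) (haL : a ∉ L) (hbL : b ∉ L)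
    (hf : ∀ v ∈ L, f v = a ∨ f v = b) : (DS a b L f).coe.IsTree := by
  have hav : a ∈ (DS a b L f).verts := Or.inr (by simp)
  have hbv : b ∈ (DS a b L f).verts := Or.inr (by simp)
  have hAdjab : (DS a b L f).Adj a b := ⟨hab, Or.inl ⟨rfl, rfl⟩⟩
  have hreach : ∀ u : (DS a b L f).verts, (DS a b L f).coe.Reachable u ⟨a, hav⟩ := by
    rintro ⟨u, hu⟩
    rcases hu with hu | hu
    · rcases hf u hu with h | h
      · refine Adj.reachable (Subgraph.Adj.coe ?_)
        refine ⟨fun he => haL (he ▸ hu), Or.inr (Or.inr (Or.inl ⟨hu, h.symm, Or.inl h⟩))⟩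
      · have r1 : (DS a b L f).Adj u b :=
          ⟨fun he => hbL (he ▸ hu), Or.inr (Or.inr (Or.inl ⟨hu, h.symm, Or.inr h⟩))⟩
        have r2 : (DS a b L f).Adj b a := ⟨hab.symm, Or.inr (Or.inl ⟨rfl, rfl⟩)⟩
        exact ((Subgraph.Adj.coe r1).reachable).trans (Subgraph.Adj.coe r2).reachable
    · rcases hu with rfl | rfl
      · rfl
      · have r : (DS a u L f).Adj u a := ⟨hab.symm, Or.inr (Or.inl ⟨rfl, rfl⟩)⟩
        exact Adj.reachable (Subgraph.Adj.coe r)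
  have hne : Nonempty ((DS a b L f).verts) := ⟨⟨a, hav⟩⟩
  constructor
  · exact Connected.mk (fun u w => (hreach u).trans (hreach w).symm)
  · intro v c hc
    have hall : ∀ u : (DS a b L f).verts, u ∈ c.support → (u : V) = a ∨ (u : V) = b := by
      intro u hu
      obtain ⟨p, q, hpq, hp, hq⟩ := cycle_two_nbrs c hc hu
      by_contra hcon
      push_neg at hcon
      have hp' : (DS a b L f).Adj u p := hp
      have hq' : (DS a b L f).Adj u q := hq
      have := DS_nbr_unique (f := f) hcon.1 hcon.2 hp' hq'
      exact hpq (Subtype.ext this)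
    have hnodup := hc.2
    have hlen : 3 ≤ c.support.tail.length := by
      have := hc.three_le_length
      have h2 := c.length_support
      simp only [List.length_tail, h2]
      omega
    have hsub : (c.support.tail.map Subtype.val).toFinset ⊆ {a, b} := by
      intro x hx
      simp only [List.mem_toFinset, List.mem_map] at hx
      obtain ⟨u, hu, rfl⟩ := hx
      rcases hall u (List.mem_of_mem_tail hu) with h | h <;> simp [h]
    have hmapnodup : (c.support.tail.map Subtype.val).Nodup :=
      hnodup.map (fun _ _ => Subtype.ext)
    have hcard := List.toFinset_card_of_nodup hmapnodup
    have hlee := Finset.card_le_card hsub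
    rw [hcard, List.length_map] at hlee
    have h3 : 3 ≤ ({a, b} : Finset V).card := le_trans hlen hlee
    have hle : ({a, b} : Finset V).card ≤ 2 := (Finset.card_insert_le ..).trans (by simp)
    omega

lemma DS_nbr_unique_b {V : Type*} {a b : V} {L : Set V} {f : V → V}
    (hab : a ≠ b) (hbL : b ∉ L) (hfa : ∀ v ∈ L, f v = a) {y z : V}
    (hy : (DS a b L f).Adj b y) (hz : (DS a b L f).Adj b z) : y = z := by
  have key : ∀ w, (DS a b L f).Adj b w → w = a := by
    intro w hw
    rcases hw.2 with ⟨h, hw⟩ | ⟨_, hw⟩ | ⟨hL, _, _⟩ | ⟨hL, h, _⟩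
    · exact absurd h hab.symm
    · exact hw
    · exact absurd hL hbL
    · exact absurd (h.trans (hfa _ hL)) hab.symm
  rw [key y hy, key z hz]

section assemble
variable {V : Type*} {G : SimpleGraph V}



/-- assemble complete independence from internal-vertex bounds -/
lemma assemble (S : Set V) {ι : Type*} (Ts : ι → G.Subgraph) (C : ι → Set V)
    (hC : ∀ i v y z, y ≠ z → (Ts i).Adj v y → (Ts i).Adj v z → v ∈ C i)
    (hCdisj : ∀ p q, p ≠ q → C p ∩ C q = ∅)
    (hedge : ∀ p q, p ≠ q → (Ts p).edgeSet ∩ (Ts q).edgeSet = ∅)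
    (hverts : ∀ p q, p ≠ q → (Ts p).verts ∩ (Ts q).verts = S) :
    G.CompletelyIndependent S Ts := by
  intro p q hpq
  refine ⟨hedge p q hpq, hverts p q hpq, ?_⟩
  intro x₁ _ x₂ _ _ P Q hPp hQp hPin hQin v hvP hvQ
  by_contra hcon
  push_neg at hcon
  obtain ⟨a, b, hab, ha, hb⟩ := path_internal_two_nbrs P hPp v hvP hcon.1 hcon.2
  obtain ⟨a', b', hab', ha', hb'⟩ := path_internal_two_nbrs Q hQp v hvQ hcon.1 hcon.2
  have hvp : v ∈ C p :=
    hC p v a b hab (Subgraph.mem_edgeSet.mp (hPin _ ha)) (Subgraph.mem_edgeSet.mp (hPin _ hb))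
  have hvq : v ∈ C q :=
    hC q v a' b' hab' (Subgraph.mem_edgeSet.mp (hQin _ ha'))
      (Subgraph.mem_edgeSet.mp (hQin _ hb'))
  have := hCdisj p q hpq
  rw [Set.eq_empty_iff_forall_notMem] at this
  exact this v ⟨hvp, hvq⟩

end assemble
end helpers


section lowerbound
variable {n s : ℕ}

lemma lower_mem (hs : 2 ≤ s) (hsn : s ≤ n) (S : Set (Fin n)) (hS : S.ncard = s) :
    ∃ Ts : Fin (n - s + s / 2) → (⊤ : SimpleGraph (Fin n)).Subgraph,
      (∀ i, (⊤ : SimpleGraph (Fin n)).IsSteinerTree S (Ts i)) ∧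
      (⊤ : SimpleGraph (Fin n)).CompletelyIndependent S Ts := by
  classical
  have hs0 : 0 < s := by omega
  haveI : Fintype S := S.toFinite.fintype
  have hcardS : Fintype.card S = s := by
    rw [← Nat.card_eq_fintype_card, Nat.card_coe_set_eq, hS]
  haveI : Fintype ↥Sᶜ := (Sᶜ).toFinite.fintype
  have hcardSc : Fintype.card ↥Sᶜ = n - s := by
    rw [← Nat.card_eq_fintype_card, Nat.card_coe_set_eq, Set.compl_eq_univ_diff,
      Set.ncard_diff (Set.subset_univ S), Set.ncard_univ, Nat.card_eq_fintype_card,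
      Fintype.card_fin, hS]
  let e1 : S ≃ Fin s := Fintype.equivFinOfCardEq hcardS
  let e2 : ↥Sᶜ ≃ Fin (n - s) := Fintype.equivFinOfCardEq hcardSc
  set m := s / 2 with hm
  let x : ℕ → Fin n := fun i => (e1.symm ⟨i % s, Nat.mod_lt i hs0⟩ : Fin n)
  let y : Fin (n - s) → Fin n := fun i => (e2.symm i : Fin n)
  have hxS : ∀ i, x i ∈ S := fun i => (e1.symm _).2
  have hx_inj : ∀ i, i < s → ∀ i', i' < s → x i = x i' → i = i' := by
    intro i hi i' hi' h
    have h2 : (⟨i % s, Nat.mod_lt i hs0⟩ : Fin s) = ⟨i' % s, Nat.mod_lt i' hs0⟩ :=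
      e1.symm.injective (Subtype.ext h)
    have h3 : i % s = i' % s := by simpa using h2
    rwa [Nat.mod_eq_of_lt hi, Nat.mod_eq_of_lt hi'] at h3
  have hyS : ∀ i, y i ∉ S := fun i => (e2.symm i).2
  have hy_inj : Function.Injective y := fun i j h => e2.symm.injective (Subtype.ext h)
  let xidx : Fin n → ℕ := fun v => if h : v ∈ S then ((e1 ⟨v, h⟩ : Fin s) : ℕ) else 0
  have hx_xidx : ∀ v ∈ S, x (xidx v) = v := by
    intro v hv
    show (e1.symm ⟨(xidx v) % s, _⟩ : Fin n) = v
    have h1 : xidx v = ((e1 ⟨v, hv⟩ : Fin s) : ℕ) := dif_pos hv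
    have h2 : (⟨(xidx v) % s, Nat.mod_lt _ hs0⟩ : Fin s) = e1 ⟨v, hv⟩ := by
      apply Fin.ext
      simp only [h1]
      exact Nat.mod_eq_of_lt (e1 ⟨v, hv⟩).isLt
    rw [h2, Equiv.symm_apply_apply]
  have hxidx_lt : ∀ v, xidx v < s := by
    intro v
    by_cases h : v ∈ S
    · show (if h : v ∈ S then ((e1 ⟨v, h⟩ : Fin s) : ℕ) else 0) < s
      rw [dif_pos h]; exact (e1 ⟨v, h⟩).isLt
    · show (if h : v ∈ S then ((e1 ⟨v, h⟩ : Fin s) : ℕ) else 0) < s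
      rw [dif_neg h]; omega
  let g : ℕ → ℕ → ℕ := fun j i => if j < i / 2 then 2 * j + i % 2 else 2 * j + 1 - i % 2
  have hg_mem : ∀ j i, g j i = 2 * j ∨ g j i = 2 * j + 1 := by
    intro j i
    have h : g j i = if j < i / 2 then 2 * j + i % 2 else 2 * j + 1 - i % 2 := rfl
    rw [h]
    split <;> omega
  -- the two kinds of trees
  let star : Fin (n - s) → (⊤ : SimpleGraph (Fin n)).Subgraph :=
    fun i => DS (y i) (x 0) (S \ {x 0}) (fun _ => y i)
  let innr : Fin m → (⊤ : SimpleGraph (Fin n)).Subgraph :=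
    fun j => DS (x (2 * j)) (x (2 * j + 1)) (S \ {x (2 * j), x (2 * j + 1)})
      (fun v => x (g j (xidx v)))
  -- hypotheses for star i
  have hstar_ab : ∀ i, y i ≠ x 0 := fun i h => hyS i (h ▸ hxS 0)
  have hstar_aL : ∀ i : Fin (n - s), y i ∉ S \ {x 0} := fun i h => hyS i h.1
  have hstar_bL : x 0 ∉ S \ {x 0} := fun h => h.2 rfl
  have hstar_f : ∀ i : Fin (n - s), ∀ v ∈ S \ {x 0},
      (fun _ : Fin n => y i) v = y i ∨ (fun _ : Fin n => y i) v = x 0 := fun i v _ => Or.inl rfl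
  have hstar_verts : ∀ i, (star i).verts = insert (y i) S := by
    intro i
    show (S \ {x 0}) ∪ {y i, x 0} = insert (y i) S
    ext z
    simp only [Set.mem_union, Set.mem_diff, Set.mem_insert_iff, Set.mem_singleton_iff]
    constructor
    · rintro (⟨hz, _⟩ | (rfl | rfl))
      · exact Or.inr hz
      · exact Or.inl rfl
      · exact Or.inr (hxS 0)
    · rintro (rfl | hz)
      · exact Or.inr (Or.inl rfl)
      · by_cases hz0 : z = x 0
        · exact Or.inr (Or.inr hz0)
        · exact Or.inl ⟨hz, hz0⟩
  -- hypotheses for innr j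
  have hj_lt : ∀ j : Fin m, 2 * (j : ℕ) + 1 < s := by
    intro j; have := j.isLt; omega
  have hinnr_ab : ∀ j : Fin m, x (2 * (j : ℕ)) ≠ x (2 * (j : ℕ) + 1) := by
    intro j h
    have := hx_inj _ (by have := hj_lt j; omega) _ (hj_lt j) h
    omega
  have hinnr_f : ∀ j : Fin m, ∀ v ∈ S \ {x (2 * (j : ℕ)), x (2 * (j : ℕ) + 1)},
      x (g j (xidx v)) = x (2 * (j : ℕ)) ∨ x (g j (xidx v)) = x (2 * (j : ℕ) + 1) := by
    intro j v _
    rcases hg_mem j (xidx v) with h | h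
    · exact Or.inl (by rw [h])
    · exact Or.inr (by rw [h])
  have hinnr_verts : ∀ j, (innr j).verts = S := by
    intro j
    show (S \ {x (2 * (j : ℕ)), x (2 * (j : ℕ) + 1)}) ∪ {x (2 * (j : ℕ)), x (2 * (j : ℕ) + 1)} = S
    apply Set.diff_union_of_subset
    rintro z (rfl | rfl)
    · exact hxS _
    · exact hxS _
  have hinnr_aL : ∀ j : Fin m, x (2 * (j : ℕ)) ∉ S \ {x (2 * (j : ℕ)), x (2 * (j : ℕ) + 1)} :=
    fun j h => h.2 (Or.inl rfl)
  have hinnr_bL : ∀ j : Fin m, x (2 * (j : ℕ) + 1) ∉ S \ {x (2 * (j : ℕ)), x (2 * (j : ℕ) + 1)} :=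
    fun j h => h.2 (Or.inr rfl)
  -- Steiner tree property
  have hSteinerStar : ∀ i, (⊤ : SimpleGraph (Fin n)).IsSteinerTree S (star i) := by
    intro i
    refine ⟨DS_isTree (hstar_ab i) (hstar_aL i) hstar_bL (hstar_f i), ?_, ?_⟩
    · rw [hstar_verts i]; exact Set.subset_insert _ _
    · intro v hv hno
      rw [hstar_verts i] at hv
      rcases hv with rfl | hv
      · exfalso
        apply hno
        have hx01 : x 0 ≠ x 1 := by
          intro h
          have := hx_inj 0 hs0 1 (by omega) h
          omega
        have h1L : x 1 ∈ S \ {x 0} := ⟨hxS 1, fun h => hx01 h.symm⟩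
        refine ⟨x 0, x 1, hx01, ⟨hstar_ab i, Or.inl ⟨rfl, rfl⟩⟩, ?_⟩
        exact ⟨fun h => hyS i (h ▸ hxS 1), Or.inr (Or.inr (Or.inr ⟨h1L, rfl, Or.inl rfl⟩))⟩
      · exact hv
  have hSteinerInnr : ∀ j, (⊤ : SimpleGraph (Fin n)).IsSteinerTree S (innr j) := by
    intro j
    refine ⟨DS_isTree (hinnr_ab j) (hinnr_aL j) (hinnr_bL j) (hinnr_f j), ?_, ?_⟩
    · rw [hinnr_verts j]
    · intro v hv _
      rw [hinnr_verts j] at hv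
      exact hv
  -- edge membership helpers
  have hstar_edge : ∀ i e, e ∈ (star i).edgeSet →
      (y i ∈ e ∧ ∀ u ∈ e, u = y i ∨ u ∈ S) := by
    intro i e he
    rw [DS_mem_edgeSet (hstar_ab i) (hstar_aL i) hstar_bL (hstar_f i)] at he
    rcases he with rfl | ⟨v, hv, rfl⟩
    · constructor
      · exact Sym2.mem_mk_left _ _
      · intro u hu
        rcases Sym2.mem_iff.mp hu with rfl | rfl
        · exact Or.inl rfl
        · exact Or.inr (hxS 0)
    · constructor
      · exact Sym2.mem_mk_right _ _
      · intro u hu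
        rcases Sym2.mem_iff.mp hu with rfl | rfl
        · exact Or.inr hv.1
        · exact Or.inl rfl
  have hinnr_edge : ∀ (j : Fin m) e, e ∈ (innr j).edgeSet →
      ∃ α β, α < s ∧ β < s ∧ e = s(x α, x β) ∧
        ((α = 2 * (j : ℕ) ∧ β = 2 * (j : ℕ) + 1) ∨
         (α ≠ 2 * (j : ℕ) ∧ α ≠ 2 * (j : ℕ) + 1 ∧ β = g j α)) := by
    intro j e he
    rw [DS_mem_edgeSet (hinnr_ab j) (hinnr_aL j) (hinnr_bL j) (hinnr_f j)] at he
    have h2j := hj_lt j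
    rcases he with rfl | ⟨v, hv, rfl⟩
    · exact ⟨2 * (j : ℕ), 2 * (j : ℕ) + 1, by omega, h2j, rfl, Or.inl ⟨rfl, rfl⟩⟩
    · refine ⟨xidx v, g j (xidx v), hxidx_lt v, ?_, by rw [hx_xidx v hv.1], Or.inr ⟨?_, ?_, rfl⟩⟩
      · rcases hg_mem j (xidx v) with h | h <;> omega
      · intro h
        exact hv.2 (Or.inl (show v = x (2 * (j : ℕ)) by rw [← hx_xidx v hv.1, h]))
      · intro h
        exact hv.2 (Or.inr (show v = x (2 * (j : ℕ) + 1) by rw [← hx_xidx v hv.1, h]))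
  -- C-sets: possible branch vertices
  have hC_star : ∀ (i : Fin (n - s)) v p q, p ≠ q →
      (star i).Adj v p → (star i).Adj v q → v = y i := by
    intro i v p q hpq hp hq
    by_contra hvy
    by_cases hv0 : v = x 0
    · subst hv0
      exact hpq (DS_nbr_unique_b (hstar_ab i) hstar_bL (fun w _ => rfl) hp hq)
    · exact hpq (DS_nbr_unique hvy hv0 hp hq)
  have hC_innr : ∀ (j : Fin m) v p q, p ≠ q →
      (innr j).Adj v p → (innr j).Adj v q →
      v = x (2 * (j : ℕ)) ∨ v = x (2 * (j : ℕ) + 1) := by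
    intro j v p q hpq hp hq
    by_contra hcon
    push_neg at hcon
    exact hpq (DS_nbr_unique hcon.1 hcon.2 hp hq)
  -- assemble over the sum type
  let F : Fin (n - s) ⊕ Fin m → (⊤ : SimpleGraph (Fin n)).Subgraph := Sum.elim star innr
  let C : Fin (n - s) ⊕ Fin m → Set (Fin n) :=
    Sum.elim (fun i => {y i}) (fun j => {x (2 * (j : ℕ)), x (2 * (j : ℕ) + 1)})
  have hF_steiner : ∀ p, (⊤ : SimpleGraph (Fin n)).IsSteinerTree S (F p) := by
    rintro (i | j)
    · exact hSteinerStar i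
    · exact hSteinerInnr j
  have hCI : (⊤ : SimpleGraph (Fin n)).CompletelyIndependent S F := by
    apply assemble S F C
    · -- hC
      rintro (i | j) v p q hpq hp hq
      · show v ∈ ({y i} : Set (Fin n))
        exact hC_star i v p q hpq hp hq
      · show v ∈ ({x (2 * (j : ℕ)), x (2 * (j : ℕ) + 1)} : Set (Fin n))
        exact hC_innr j v p q hpq hp hq
    · -- hCdisj
      rintro (i | j) (i' | j') hne
      · have hne' : y i ≠ y i' := fun h => hne (by rw [hy_inj h])
        ext z
        simp only [C, Sum.elim_inl, Set.mem_inter_iff, Set.mem_singleton_iff,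
          Set.mem_empty_iff_false, iff_false, not_and]
        rintro rfl h
        exact hne' h
      · ext z
        simp only [C, Sum.elim_inl, Sum.elim_inr, Set.mem_inter_iff, Set.mem_singleton_iff,
          Set.mem_insert_iff, Set.mem_empty_iff_false, iff_false, not_and]
        rintro rfl (h | h) <;> exact absurd (h ▸ hxS _) (hyS i)
      · ext z
        simp only [C, Sum.elim_inl, Sum.elim_inr, Set.mem_inter_iff, Set.mem_singleton_iff,
          Set.mem_insert_iff, Set.mem_empty_iff_false, iff_false, not_and]
        rintro (h | h) rfl <;> exact absurd (h ▸ hxS _) (hyS i')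
      · have hjj : (j : ℕ) ≠ (j' : ℕ) := fun h => hne (by rw [Fin.ext h])
        have hd : ∀ α β, (α = 2 * (j : ℕ) ∨ α = 2 * (j : ℕ) + 1) →
            (β = 2 * (j' : ℕ) ∨ β = 2 * (j' : ℕ) + 1) → x α ≠ x β := by
          intro α β hα hβ h
          have h1 : α < s := by rcases hα with rfl | rfl <;> (have := hj_lt j; omega)
          have h2 : β < s := by rcases hβ with rfl | rfl <;> (have := hj_lt j'; omega)
          have := hx_inj _ h1 _ h2 h
          omega
        ext z
        simp only [C, Sum.elim_inr, Set.mem_inter_iff, Set.mem_insert_iff,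
          Set.mem_singleton_iff, Set.mem_empty_iff_false, iff_false, not_and]
        rintro (rfl | rfl) (h | h) <;>
          [exact hd _ _ (Or.inl rfl) (Or.inl rfl) h;
           exact hd _ _ (Or.inl rfl) (Or.inr rfl) h;
           exact hd _ _ (Or.inr rfl) (Or.inl rfl) h;
           exact hd _ _ (Or.inr rfl) (Or.inr rfl) h]
    · -- hedge
      have star_star : ∀ (i i' : Fin (n - s)), i ≠ i' →
          (star i).edgeSet ∩ (star i').edgeSet = ∅ := by
        intro i i' hne
        ext e
        simp only [Set.mem_inter_iff, Set.mem_empty_iff_false, iff_false, not_and]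
        intro he he'
        obtain ⟨hm1, hall1⟩ := hstar_edge i e he
        obtain ⟨hm2, _⟩ := hstar_edge i' e he'
        rcases hall1 _ hm2 with h | h
        · exact hne (hy_inj h.symm ▸ rfl)
        · exact hyS i' h
      have star_innr : ∀ (i : Fin (n - s)) (j : Fin m),
          (star i).edgeSet ∩ (innr j).edgeSet = ∅ := by
        intro i j
        ext e
        simp only [Set.mem_inter_iff, Set.mem_empty_iff_false, iff_false, not_and]
        intro he he'
        obtain ⟨hm1, _⟩ := hstar_edge i e he
        obtain ⟨α, β, hα, hβ, he2, _⟩ := hinnr_edge j e he'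
        subst he2
        rcases Sym2.mem_iff.mp hm1 with h | h <;> exact hyS i (h ▸ hxS _)
      have innr_innr : ∀ (j j' : Fin m), j ≠ j' →
          (innr j).edgeSet ∩ (innr j').edgeSet = ∅ := by
        intro j j' hne
        have hjj : (j : ℕ) ≠ (j' : ℕ) := fun h => hne (by rw [Fin.ext h])
        ext e
        simp only [Set.mem_inter_iff, Set.mem_empty_iff_false, iff_false, not_and]
        intro he he'
        obtain ⟨α, β, hα, hβ, he1, hP⟩ := hinnr_edge j e he
        obtain ⟨α', β', hα', hβ', he2, hP'⟩ := hinnr_edge j' e he'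
        have heq : s(x α, x β) = s(x α', x β') := he1.symm.trans he2
        have hgj := hg_mem j α
        have hgj' := hg_mem j' α'
        have hidx : (α = α' ∧ β = β') ∨ (α = β' ∧ β = α') := by
          rw [Sym2.eq_iff] at heq
          rcases heq with ⟨h1, h2⟩ | ⟨h1, h2⟩
          · exact Or.inl ⟨hx_inj _ hα _ hα' h1, hx_inj _ hβ _ hβ' h2⟩
          · exact Or.inr ⟨hx_inj _ hα _ hβ' h1, hx_inj _ hβ _ hα' h2⟩
        have h2j := hj_lt j
        have h2j' := hj_lt j'
        simp only [g] at hP hP'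
        split_ifs at hP hP' <;> omega
      rintro (i | j) (i' | j') hne
      · exact star_star i i' (fun h => hne (by rw [h]))
      · exact star_innr i j'
      · rw [Set.inter_comm]; exact star_innr i' j
      · exact innr_innr j j' (fun h => hne (by rw [h]))
    · -- hverts
      have hyy : ∀ (i : Fin (n - s)), insert (y i) S ∩ S = S := by
        intro i
        apply Set.inter_eq_self_of_subset_right
        exact Set.subset_insert _ _
      rintro (i | j) (i' | j') hne
      · show (star i).verts ∩ (star i').verts = S
        rw [hstar_verts, hstar_verts]
        have hne' : y i ≠ y i' := fun h => hne (by rw [hy_inj h])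
        ext z
        simp only [Set.mem_inter_iff, Set.mem_insert_iff]
        constructor
        · rintro ⟨rfl | hz, h2⟩
          · rcases h2 with h | h
            · exact absurd h hne'
            · exact h
          · exact hz
        · intro hz
          exact ⟨Or.inr hz, Or.inr hz⟩
      · show (star i).verts ∩ (innr j').verts = S
        rw [hstar_verts, hinnr_verts, hyy]
      · show (innr j).verts ∩ (star i').verts = S
        rw [hstar_verts, hinnr_verts, Set.inter_comm, hyy]
      · show (innr j).verts ∩ (innr j').verts = S
        rw [hinnr_verts, hinnr_verts, Set.inter_self]
  -- transport along Fin (n - s) ⊕ Fin m ≃ Fin (n - s + m)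
  let E : Fin (n - s) ⊕ Fin m ≃ Fin (n - s + m) := finSumFinEquiv
  refine ⟨F ∘ E.symm, fun i => hF_steiner _, ?_⟩
  intro p q hpq
  exact hCI (E.symm p) (E.symm q) (fun h => hpq (by simpa using congrArg E h))

end lowerbound


section upperbound

lemma upper_le {n s : ℕ} (hn : 4 ≤ n) (hs : 2 ≤ s) (S : Set (Fin n)) (hS : S.ncard = s)
    {k : ℕ} (Ts : Fin k → (⊤ : SimpleGraph (Fin n)).Subgraph)
    (hSt : ∀ i, (⊤ : SimpleGraph (Fin n)).IsSteinerTree S (Ts i))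
    (hCI : (⊤ : SimpleGraph (Fin n)).CompletelyIndependent S Ts) :
    k ≤ n - s + s / 2 := by
  classical
  set A := Finset.univ.filter (fun i : Fin k => ¬ (Ts i).verts ⊆ S) with hA
  set B := Finset.univ.filter (fun i : Fin k => (Ts i).verts ⊆ S) with hB
  -- part 1 : trees using an outside vertex
  have hwit : ∀ i ∈ A, ((Ts i).verts \ S).Nonempty := by
    intro i hi
    rw [hA, Finset.mem_filter] at hi
    rcases Set.not_subset.mp hi.2 with ⟨v, hv1, hv2⟩
    exact ⟨v, hv1, hv2⟩
  let w : Fin k → Fin n := fun i =>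
    if h : ((Ts i).verts \ S).Nonempty then h.choose else ⟨0, by omega⟩
  have hw : ∀ i ∈ A, w i ∈ (Ts i).verts ∧ w i ∉ S := by
    intro i hi
    have h := hwit i hi
    simp only [w, dif_pos h]
    exact h.choose_spec
  have hAcard : A.card ≤ n - s := by
    have hle : A.card ≤ (S.toFinsetᶜ).card := by
      apply Finset.card_le_card_of_injOn w
      · intro i hi
        simp only [Finset.mem_coe, Finset.mem_compl, Set.mem_toFinset]
        exact (hw i hi).2
      · intro i hi j hj hij
        by_contra hne
        have h1 := (hCI i j hne).2.1
        have : w i ∈ S := by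
          rw [← h1]
          exact ⟨(hw i (Finset.mem_coe.mp hi)).1, hij ▸ (hw j (Finset.mem_coe.mp hj)).1⟩
        exact (hw i (Finset.mem_coe.mp hi)).2 this
    have h1 : Fintype.card ↥S = s := by
      rw [← Nat.card_eq_fintype_card, Nat.card_coe_set_eq, hS]
    rwa [Finset.card_compl, Set.toFinset_card, h1, Fintype.card_fin] at hle
  -- part 2 : trees inside S
  have hveq : ∀ i ∈ B, (Ts i).verts = S := by
    intro i hi
    rw [hB, Finset.mem_filter] at hi
    exact subset_antisymm hi.2 (hSt i).2.1
  have hedgecard : ∀ i ∈ B, (Ts i).edgeSet.ncard = s - 1 := by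
    intro i hi
    haveI : Fintype (Ts i).verts := Set.Finite.fintype (Set.toFinite _)
    haveI : Fintype ((Ts i).coe.edgeSet) := Set.Finite.fintype (Set.toFinite _)
    have hcount := (hSt i).1.card_edgeFinset
    have hvcard : Fintype.card (Ts i).verts = s := by
      rw [← Nat.card_eq_fintype_card, Nat.card_coe_set_eq, hveq i hi, hS]
    have h1 : (Ts i).edgeSet = Sym2.map (Subtype.val) '' (Ts i).coe.edgeSet :=
      ((Ts i).image_coe_edgeSet_coe).symm
    rw [h1, Set.ncard_image_of_injective _ (Sym2.map.injective Subtype.val_injective),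
      Set.ncard_eq_toFinset_card']
    have h2 : (Ts i).coe.edgeSet.toFinset = (Ts i).coe.edgeFinset := rfl
    rw [h2]
    omega
  set target : Finset (Sym2 (Fin n)) := S.toFinset.sym2.filter (fun e => ¬ e.IsDiag)
    with htarget
  have hsub : ∀ i ∈ B, (Ts i).edgeSet.toFinset ⊆ target := by
    intro i hi e he
    rw [Set.mem_toFinset] at he
    simp only [htarget, Finset.mem_filter, Finset.mem_sym2_iff, Set.mem_toFinset]
    revert he
    refine Sym2.ind (fun u v he => ?_) e
    rw [Subgraph.mem_edgeSet] at he
    refine ⟨?_, ?_⟩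
    · intro a ha
      rcases Sym2.mem_iff.mp ha with rfl | rfl
      · exact (hveq i hi) ▸ ((Ts i).edge_vert he)
      · exact (hveq i hi) ▸ ((Ts i).edge_vert he.symm)
    · rw [Sym2.mk_isDiag_iff]
      have := (Ts i).adj_sub he
      simp only [top_adj] at this
      exact this
  have hBsum : B.card * (s - 1) ≤ target.card := by
    have h1 : (B.biUnion (fun i => (Ts i).edgeSet.toFinset)).card
        = ∑ i ∈ B, (Ts i).edgeSet.toFinset.card := by
      apply Finset.card_biUnion
      intro x hx y hy hxy
      rw [Function.onFun, Set.disjoint_toFinset, Set.disjoint_iff_inter_eq_empty]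
      exact (hCI x y hxy).1
    have h2 : ∑ i ∈ B, ((Ts i).edgeSet.toFinset).card = B.card * (s - 1) := by
      rw [Finset.sum_congr rfl
        (fun i hi => by rw [← Set.ncard_eq_toFinset_card', hedgecard i hi]),
        Finset.sum_const, smul_eq_mul]
    have h3 : (B.biUnion (fun i => (Ts i).edgeSet.toFinset)).card ≤ target.card :=
      Finset.card_le_card (Finset.biUnion_subset.mpr hsub)
    omega
  have hScard : S.toFinset.card = s := by
    rw [Set.toFinset_card, ← Nat.card_eq_fintype_card, Nat.card_coe_set_eq, hS]
  have hdiagfilter : (S.toFinset.sym2.filter (fun e => e.IsDiag)).card = s := by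
    have himg : S.toFinset.sym2.filter (fun e => e.IsDiag) = S.toFinset.image Sym2.diag := by
      ext e
      simp only [Finset.mem_filter, Finset.mem_image, Finset.mem_sym2_iff, Set.mem_toFinset]
      constructor
      · revert e
        refine Sym2.ind (fun u v h => ?_)
        rcases h with ⟨hmem, hdiag⟩
        rw [Sym2.mk_isDiag_iff] at hdiag
        subst hdiag
        exact ⟨u, hmem u (Sym2.mem_mk_left u u), rfl⟩
      · rintro ⟨a, ha, rfl⟩
        constructor
        · intro z hz
          rcases Sym2.mem_iff.mp hz with rfl | rfl <;> exact ha
        · exact Sym2.diag_isDiag a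
    rw [himg, Finset.card_image_of_injective _ Sym2.diag_injective, hScard]
  have htargetcard : target.card = (s + 1).choose 2 - s := by
    have hsplit := Finset.card_filter_add_card_filter_not
      (s := S.toFinset.sym2) (p := fun e => e.IsDiag)
    rw [Finset.card_sym2, hScard] at hsplit
    rw [htarget]
    omega
  -- final arithmetic
  have hchoose : (s + 1).choose 2 = (s + 1) * s / 2 := by
    rw [Nat.choose_two_right]
    simp
  have hBcard : B.card ≤ s / 2 := by
    obtain ⟨c, hc⟩ := Nat.even_mul_succ_self s
    have hc' : s * (s + 1) = 2 * c := by omega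
    have hdiv : (s + 1) * s / 2 = c := by rw [mul_comm, hc']; omega
    have key : s * (s - 1) + 2 * s = s * (s + 1) := by
      have h : s - 1 + 2 = s + 1 := by omega
      calc s * (s - 1) + 2 * s = s * ((s - 1) + 2) := by ring
        _ = s * (s + 1) := by rw [h]
    have h3 : 2 * (B.card * (s - 1)) ≤ s * (s - 1) := by
      rw [htargetcard, hchoose, hdiv] at hBsum
      omega
    have h4 : (2 * B.card) * (s - 1) ≤ s * (s - 1) := by
      calc (2 * B.card) * (s - 1) = 2 * (B.card * (s - 1)) := by ring
        _ ≤ s * (s - 1) := h3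
    have h5 : 2 * B.card ≤ s := Nat.le_of_mul_le_mul_right h4 (by omega)
    omega
  -- combine
  have hsplit := Finset.card_filter_add_card_filter_not
    (s := (Finset.univ : Finset (Fin k))) (p := fun i => (Ts i).verts ⊆ S)
  rw [Finset.card_univ, Fintype.card_fin] at hsplit
  have hAB : B.card + A.card = k := hsplit
  omega

end upperbound

theorem stmt_6 (n s : ℕ) (hn : 4 ≤ n) (hs : 2 ≤ s) (hsn : s ≤ n) :
    (⊤ : SimpleGraph (Fin n)).genConnStar s = n - (s + 1) / 2 := by
  classical
  set N := n - s + s / 2 with hN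
  have hNval : n - (s + 1) / 2 = N := by omega
  have hpack : ∀ S : Set (Fin n), S.ncard = s →
      (⊤ : SimpleGraph (Fin n)).cisstPacking S = N := by
    intro S hS
    have hub : ∀ kk ∈ {k | ∃ Ts : Fin k → (⊤ : SimpleGraph (Fin n)).Subgraph,
        (∀ i, (⊤ : SimpleGraph (Fin n)).IsSteinerTree S (Ts i)) ∧
        (⊤ : SimpleGraph (Fin n)).CompletelyIndependent S Ts}, kk ≤ N := by
      rintro kk ⟨Ts, hSt, hCI⟩
      exact upper_le hn hs S hS Ts hSt hCI
    have hmem : N ∈ {k | ∃ Ts : Fin k → (⊤ : SimpleGraph (Fin n)).Subgraph,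
        (∀ i, (⊤ : SimpleGraph (Fin n)).IsSteinerTree S (Ts i)) ∧
        (⊤ : SimpleGraph (Fin n)).CompletelyIndependent S Ts} := lower_mem hs hsn S hS
    have h0 : (0 : ℕ) ∈ {k | ∃ Ts : Fin k → (⊤ : SimpleGraph (Fin n)).Subgraph,
        (∀ i, (⊤ : SimpleGraph (Fin n)).IsSteinerTree S (Ts i)) ∧
        (⊤ : SimpleGraph (Fin n)).CompletelyIndependent S Ts} :=
      ⟨Fin.elim0, fun i => i.elim0, fun p _ _ => p.elim0⟩
    exact le_antisymm (csSup_le ⟨0, h0⟩ hub) (le_csSup ⟨N, hub⟩ hmem)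
  have hS0 : ∃ S : Set (Fin n), S.ncard = s := by
    refine ⟨↑(Finset.image (Fin.castLE hsn) Finset.univ), ?_⟩
    rw [Set.ncard_coe_finset,
      Finset.card_image_of_injective _ (Fin.castLE_injective hsn),
      Finset.card_univ, Fintype.card_fin]
  have himg : (⊤ : SimpleGraph (Fin n)).cisstPacking '' {S : Set (Fin n) | S.ncard = s}
      = {N} := by
    ext t
    simp only [Set.mem_image, Set.mem_setOf_eq, Set.mem_singleton_iff]
    constructor
    · rintro ⟨S, hS, rfl⟩
      exact hpack S hS
    · rintro rfl
      obtain ⟨S, hS⟩ := hS0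
      exact ⟨S, hS, hpack S hS⟩
  show sInf ((⊤ : SimpleGraph (Fin n)).cisstPacking '' {S : Set (Fin n) | S.ncard = s})
      = n - (s + 1) / 2
  rw [himg, csInf_singleton, hNval]
end

section
/- Let K_{m₁,m₂} be a complete bipartite graph with bipartition (X, Y), |X| = m₁, |Y| = m₂, 2 ≤ m₁ ≤ m₂. If S ⊆ X with |S| ≥ 2, then κ*_{K_{m₁,m₂}}(S) = m₂; if S ⊆ Y with |S| ≥ 2, then κ*_{K_{m₁,m₂}}(S) = m₁. -/
open SimpleGraph

lemma starPath_support {V : Type*} {G : SimpleGraph V} {c x₁ x₂ : V}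
    (hne : x₁ ≠ x₂) (hx₁ : x₁ ≠ c) (hx₂ : x₂ ≠ c) (P : G.Walk x₁ x₂) (hP : P.IsPath)
    (hE : ∀ e ∈ P.edges, c ∈ e) :
    ∀ v ∈ P.support, v = x₁ ∨ v = c ∨ v = x₂ := by
  cases P with
  | nil => exact absurd rfl hne
  | cons h Q =>
    rename_i w
    have h1 : c = x₁ ∨ c = w := Sym2.mem_iff.1 (hE _ (by simp))
    have hcw : c = w := h1.resolve_left (Ne.symm hx₁)
    cases Q with
    | nil => exact absurd (hcw ▸ rfl) hx₂
    | cons h2 R =>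
      rename_i u
      cases R with
      | nil =>
        intro v hv
        simp only [Walk.support_cons, Walk.support_nil, List.mem_cons,
          List.not_mem_nil, or_false] at hv
        rcases hv with rfl | rfl | rfl
        · exact Or.inl rfl
        · exact Or.inr (Or.inl hcw.symm)
        · exact Or.inr (Or.inr rfl)
      | cons h3 R2 =>
        rename_i z
        exfalso
        have hnd := hP.support_nodup
        simp only [Walk.support_cons, List.nodup_cons, List.mem_cons] at hnd
        have h4 : c = u ∨ c = z := Sym2.mem_iff.1 (hE _ (by simp))
        rcases h4 with h4 | h4
        · exact hnd.2.1 (Or.inl (hcw ▸ h4 : w = u))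
        · exact hnd.2.1 (Or.inr (by rw [← hcw, h4]; exact R2.start_mem_support))

lemma star_isAcyclic {V : Type*} {H : SimpleGraph V} {c : V}
    (h : ∀ a b, H.Adj a b → a = c ∨ b = c) : H.IsAcyclic := by
  intro v W hW
  cases W with
  | nil => exact Walk.IsCycle.not_of_nil hW
  | cons hadj Q =>
    rename_i w
    obtain ⟨hQp, hQe⟩ := (Walk.cons_isCycle_iff Q hadj).1 hW
    have h3l := hW.three_le_length
    cases Q with
    | nil => simp at h3l
    | cons h2 R =>
      rename_i u
      cases R with
      | nil => simp at h3l
      | cons h3 R2 =>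
        rename_i z
        have hnd := hQp.support_nodup
        simp only [Walk.support_cons, List.nodup_cons, List.mem_cons] at hnd
        have hv : v ∈ R2.support := R2.end_mem_support
        have hz : z ∈ R2.support := R2.start_mem_support
        rcases h _ _ h2 with hwc | huc
        · rcases h _ _ h3 with huc | hzc
          · exact hnd.1 (Or.inl (hwc.trans huc.symm))
          · exact hnd.1 (Or.inr ((hzc.trans hwc.symm) ▸ hz))
        · rcases h _ _ hadj with hvc | hwc
          · exact hnd.2.1 ((hvc.trans huc.symm) ▸ hv)
          · exact hnd.1 (Or.inl (hwc.trans huc.symm))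

lemma star_connected {V : Type*} {H : SimpleGraph V} (c : V)
    (hc : ∀ v : V, v = c ∨ H.Adj v c) : H.Connected := by
  rw [connected_iff]
  refine ⟨fun u v => ?_, ⟨c⟩⟩
  have hu : H.Reachable u c := by
    rcases hc u with rfl | h
    · exact Reachable.refl _
    · exact h.reachable
  have hv : H.Reachable v c := by
    rcases hc v with rfl | h
    · exact Reachable.refl _
    · exact h.reachable
  exact hu.trans hv.symm

/-- The star subgraph with centre `c` and leaf set `S`. -/
def starSub {V : Type*} (G : SimpleGraph V) (c : V) (S : Set V)
    (hc : ∀ s ∈ S, G.Adj c s) : G.Subgraph where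
  verts := insert c S
  Adj a b := (a = c ∧ b ∈ S) ∨ (b = c ∧ a ∈ S)
  adj_sub := by
    rintro a b (⟨rfl, hb⟩ | ⟨rfl, ha⟩)
    · exact hc b hb
    · exact (hc a ha).symm
  edge_vert := by
    rintro a b (⟨rfl, hb⟩ | ⟨rfl, ha⟩)
    · exact Set.mem_insert _ _
    · exact Set.mem_insert_of_mem _ ha
  symm := by
    constructor; rintro a b (⟨rfl, hb⟩ | ⟨rfl, ha⟩)
    · exact Or.inr ⟨rfl, hb⟩
    · exact Or.inl ⟨rfl, ha⟩

lemma starSub_edge_mem {V : Type*} {G : SimpleGraph V} {c : V} {S : Set V}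
    {hc : ∀ s ∈ S, G.Adj c s} {e : Sym2 V} (he : e ∈ (starSub G c S hc).edgeSet) :
    c ∈ e := by
  induction e using Sym2.ind with
  | _ a b =>
    rw [Subgraph.mem_edgeSet] at he
    rcases he with ⟨rfl, _⟩ | ⟨rfl, _⟩
    · exact Sym2.mem_mk_left _ _
    · exact Sym2.mem_mk_right _ _

lemma starSub_isSteinerTree {V : Type*} {G : SimpleGraph V} {c : V} {S : Set V}
    (hc : ∀ s ∈ S, G.Adj c s) (hS : 2 ≤ S.ncard) :
    G.IsSteinerTree S (starSub G c S hc) := by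
  refine ⟨⟨star_connected ⟨c, Set.mem_insert _ _⟩ ?_, star_isAcyclic (c := (⟨c, Set.mem_insert _ _⟩ : ↥(insert c S))) ?_⟩, Set.subset_insert _ _, ?_⟩
  · rintro ⟨v, hv⟩
    rcases hv with rfl | hv
    · exact Or.inl rfl
    · exact Or.inr (Or.inr ⟨rfl, hv⟩)
  · rintro ⟨a, ha⟩ ⟨b, hb⟩ hab
    rcases hab with ⟨h1, _⟩ | ⟨h1, _⟩
    · exact Or.inl (Subtype.ext h1)
    · exact Or.inr (Subtype.ext h1)
  · intro v hv hleaf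
    rcases hv with rfl | hv
    · exfalso
      obtain ⟨a, b, ha, hb, hab⟩ := (Set.one_lt_ncard_iff (Set.finite_of_ncard_ne_zero (by omega))).1 hS
      exact hleaf ⟨a, b, hab, Or.inl ⟨rfl, ha⟩, Or.inl ⟨rfl, hb⟩⟩
    · exact hv


lemma starSub_completelyIndependent {V ι : Type*} (G : SimpleGraph V) (S : Set V)
    (c : ι → V) (hinj : Function.Injective c) (hcS : ∀ i, c i ∉ S)
    (hc : ∀ i, ∀ s ∈ S, G.Adj (c i) s) :
    G.CompletelyIndependent S (fun i => starSub G (c i) S (hc i)) := by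
  intro p q hpq
  refine ⟨?_, ?_, ?_⟩
  · rw [Set.eq_empty_iff_forall_notMem]
    intro e he
    obtain ⟨he1, he2⟩ := he
    induction e using Sym2.ind with
    | _ a b =>
      rw [Subgraph.mem_edgeSet] at he1 he2
      rcases he1 with ⟨rfl, hb⟩ | ⟨rfl, ha⟩ <;>
        rcases he2 with ⟨h2, _⟩ | ⟨h2, _⟩
      · exact hpq (hinj h2)
      · exact hcS q (h2 ▸ hb)
      · exact hcS q (h2 ▸ ha)
      · exact hpq (hinj h2)
  · ext v
    constructor
    · rintro ⟨h1, h2⟩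
      rcases h1 with rfl | h1
      · rcases h2 with h2 | h2
        · exact absurd (hinj h2) hpq
        · exact absurd h2 (hcS p)
      · exact h1
    · intro hv
      exact ⟨Set.mem_insert_of_mem _ hv, Set.mem_insert_of_mem _ hv⟩
  · intro x₁ hx₁ x₂ hx₂ hne P Q hPp hQp hPin hQin v hvP hvQ
    have hx1p : x₁ ≠ c p := fun h => hcS p (h ▸ hx₁)
    have hx2p : x₂ ≠ c p := fun h => hcS p (h ▸ hx₂)
    have hx1q : x₁ ≠ c q := fun h => hcS q (h ▸ hx₁)
    have hx2q : x₂ ≠ c q := fun h => hcS q (h ▸ hx₂)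
    have hA := starPath_support hne hx1p hx2p P hPp
      (fun e he => starSub_edge_mem (hPin e he)) v hvP
    have hB := starPath_support hne hx1q hx2q Q hQp
      (fun e he => starSub_edge_mem (hQin e he)) v hvQ
    rcases hA with h | h | h
    · exact Or.inl h
    · rcases hB with h' | h' | h'
      · exact Or.inl h'
      · exact absurd (hinj (h ▸ h' ▸ rfl : c p = c q)) hpq
      · exact Or.inr h'
    · exact Or.inr h

lemma steiner_path_exists {V : Type*} {G : SimpleGraph V} {S : Set V}
    (T : G.Subgraph) (hT : G.IsSteinerTree S T) {x₁ x₂ : V}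
    (hx₁ : x₁ ∈ S) (hx₂ : x₂ ∈ S) :
    ∃ P : G.Walk x₁ x₂, P.IsPath ∧ T.walkIn P := by
  classical
  obtain ⟨htree, hsub, _⟩ := hT
  have hr : T.coe.Reachable ⟨x₁, hsub hx₁⟩ ⟨x₂, hsub hx₂⟩ :=
    htree.isConnected.preconnected _ _
  let W := hr.some.toPath
  refine ⟨W.val.map T.hom,
    Walk.map_isPath_of_injective Subgraph.hom_injective W.2, ?_⟩
  intro e he
  replace he : e ∈ W.val.edges.map (Sym2.map T.hom) :=
    (congrArg (e ∈ ·) (Walk.edges_map (f := T.hom) (p := W.val))).mp he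
  obtain ⟨e', he', rfl⟩ := List.mem_map.1 he
  have hes : e' ∈ T.coe.edgeSet := Walk.edges_subset_edgeSet _ he'
  induction e' using Sym2.ind with
  | _ a b =>
    rw [mem_edgeSet] at hes
    exact hes

lemma ub_lemma {V : Type*} {G : SimpleGraph V} {S : Set V} {k n : ℕ}
    (Ts : Fin k → G.Subgraph) (hT : ∀ i, G.IsSteinerTree S (Ts i))
    (hCI : G.CompletelyIndependent S Ts)
    {x₁ x₂ : V} (hx₁ : x₁ ∈ S) (hx₂ : x₂ ∈ S) (hne : x₁ ≠ x₂)
    (inj : Fin n → V) (hinj : Function.Injective inj)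
    (hadj : ∀ w, G.Adj x₁ w → w ∈ Set.range inj)
    (h1 : x₁ ∉ Set.range inj) (h2 : x₂ ∉ Set.range inj) : k ≤ n := by
  have paths : ∀ i, ∃ P : G.Walk x₁ x₂, P.IsPath ∧ (Ts i).walkIn P :=
    fun i => steiner_path_exists (Ts i) (hT i) hx₁ hx₂
  choose P hPp hPin using paths
  have hfirst : ∀ i, ∃ y : Fin n, inj y ∈ (P i).support := by
    intro i
    have hnil : ¬ (P i).Nil := Walk.not_nil_of_ne hne
    have hadj1 : G.Adj x₁ ((P i).getVert 1) := Walk.adj_snd hnil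
    obtain ⟨y, hy⟩ := hadj _ hadj1
    refine ⟨y, ?_⟩
    rw [Walk.mem_support_iff_exists_getVert]
    refine ⟨1, hy.symm, ?_⟩
    have := (Walk.nil_iff_length_eq (p := P i)).not.1 hnil
    omega
  choose f hf using hfirst
  have hfinj : Function.Injective f := by
    intro p q hpq
    by_contra hne'
    have := (hCI p q hne').2.2 x₁ hx₁ x₂ hx₂ hne (P p) (P q) (hPp p) (hPp q)
      (hPin p) (hPin q) (inj (f p)) (hf p) (hpq ▸ hf q)
    rcases this with h | h
    · exact h1 (h ▸ ⟨f p, rfl⟩)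
    · exact h2 (h ▸ ⟨f p, rfl⟩)
  simpa using Fintype.card_le_of_injective f hfinj

theorem stmt_7 (m₁ m₂ : ℕ) (h1 : 2 ≤ m₁) (h12 : m₁ ≤ m₂)
    (S : Set (Fin m₁ ⊕ Fin m₂)) (hS : 2 ≤ S.ncard) :
    (S ⊆ Set.range Sum.inl →
      (completeBipartiteGraph (Fin m₁) (Fin m₂)).cisstPacking S = m₂) ∧
    (S ⊆ Set.range Sum.inr →
      (completeBipartiteGraph (Fin m₁) (Fin m₂)).cisstPacking S = m₁) := by
  set G := completeBipartiteGraph (Fin m₁) (Fin m₂) with hG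
  obtain ⟨x₁, x₂, hx₁S, hx₂S, hne⟩ := (Set.one_lt_ncard_iff (Set.toFinite S)).1 hS
  have hzero : (0 : ℕ) ∈ {k | ∃ Ts : Fin k → G.Subgraph,
      (∀ i, G.IsSteinerTree S (Ts i)) ∧ G.CompletelyIndependent S Ts} :=
    ⟨fun i => i.elim0, fun i => i.elim0, fun p => p.elim0⟩
  constructor
  · intro hsub
    obtain ⟨a₁, ha₁⟩ := hsub hx₁S
    obtain ⟨a₂, ha₂⟩ := hsub hx₂S
    have hadj : ∀ w, G.Adj x₁ w → w ∈ Set.range Sum.inr := by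
      intro w hw
      rw [hG, completeBipartiteGraph_adj, ← ha₁] at hw
      have hw' : w.isRight := by
        rcases hw with ⟨_, h⟩ | ⟨h, _⟩
        · exact h
        · simp at h
      obtain ⟨y, rfl⟩ := Sum.isRight_iff.1 hw'
      exact ⟨y, rfl⟩
    have hr1 : x₁ ∉ Set.range Sum.inr := by
      rintro ⟨y, hy⟩; rw [← ha₁] at hy; exact Sum.inl_ne_inr hy.symm
    have hr2 : x₂ ∉ Set.range Sum.inr := by
      rintro ⟨y, hy⟩; rw [← ha₂] at hy; exact Sum.inl_ne_inr hy.symm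
    have hub : ∀ k ∈ {k | ∃ Ts : Fin k → G.Subgraph,
        (∀ i, G.IsSteinerTree S (Ts i)) ∧ G.CompletelyIndependent S Ts}, k ≤ m₂ := by
      rintro k ⟨Ts, hT, hCI⟩
      exact ub_lemma Ts hT hCI hx₁S hx₂S hne Sum.inr Sum.inr_injective hadj hr1 hr2
    have hc : ∀ j : Fin m₂, ∀ s ∈ S, G.Adj (Sum.inr j) s := by
      intro j s hs
      obtain ⟨a, ha⟩ := hsub hs
      rw [hG, completeBipartiteGraph_adj, ← ha]
      simp
    have hcS : ∀ j : Fin m₂, (Sum.inr j : Fin m₁ ⊕ Fin m₂) ∉ S := by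
      intro j hj
      obtain ⟨a, ha⟩ := hsub hj
      exact Sum.inl_ne_inr ha
    refine le_antisymm (csSup_le ⟨0, hzero⟩ hub) (le_csSup ⟨m₂, hub⟩ ?_)
    exact ⟨fun j => starSub G (Sum.inr j) S (hc j),
      fun j => starSub_isSteinerTree (hc j) hS,
      starSub_completelyIndependent G S (fun j => Sum.inr j)
        (fun _ _ h => Sum.inr_injective h) hcS hc⟩
  · intro hsub
    obtain ⟨a₁, ha₁⟩ := hsub hx₁S
    obtain ⟨a₂, ha₂⟩ := hsub hx₂S
    have hadj : ∀ w, G.Adj x₁ w → w ∈ Set.range Sum.inl := by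
      intro w hw
      rw [hG, completeBipartiteGraph_adj, ← ha₁] at hw
      have hw' : w.isLeft := by
        rcases hw with ⟨h, _⟩ | ⟨_, h⟩
        · simp at h
        · exact h
      obtain ⟨y, rfl⟩ := Sum.isLeft_iff.1 hw'
      exact ⟨y, rfl⟩
    have hr1 : x₁ ∉ Set.range Sum.inl := by
      rintro ⟨y, hy⟩; rw [← ha₁] at hy; exact Sum.inl_ne_inr hy
    have hr2 : x₂ ∉ Set.range Sum.inl := by
      rintro ⟨y, hy⟩; rw [← ha₂] at hy; exact Sum.inl_ne_inr hy
    have hub : ∀ k ∈ {k | ∃ Ts : Fin k → G.Subgraph,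
        (∀ i, G.IsSteinerTree S (Ts i)) ∧ G.CompletelyIndependent S Ts}, k ≤ m₁ := by
      rintro k ⟨Ts, hT, hCI⟩
      exact ub_lemma Ts hT hCI hx₁S hx₂S hne Sum.inl Sum.inl_injective hadj hr1 hr2
    have hc : ∀ j : Fin m₁, ∀ s ∈ S, G.Adj (Sum.inl j) s := by
      intro j s hs
      obtain ⟨a, ha⟩ := hsub hs
      rw [hG, completeBipartiteGraph_adj, ← ha]
      simp
    have hcS : ∀ j : Fin m₁, (Sum.inl j : Fin m₁ ⊕ Fin m₂) ∉ S := by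
      intro j hj
      obtain ⟨a, ha⟩ := hsub hj
      exact Sum.inl_ne_inr ha.symm
    refine le_antisymm (csSup_le ⟨0, hzero⟩ hub) (le_csSup ⟨m₁, hub⟩ ?_)
    exact ⟨fun j => starSub G (Sum.inl j) S (hc j),
      fun j => starSub_isSteinerTree (hc j) hS,
      starSub_completelyIndependent G S (fun j => Sum.inl j)
        (fun _ _ h => Sum.inl_injective h) hcS hc⟩
end

section
/- For 2 ≤ m₁ ≤ m₂, the complete bipartite graph K_{m₁,m₂} contains ⌊m₁/2⌋ pairwise completely independent spanning trees. -/
open SimpleGraph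

/-- adjacency pattern of the `i`-th tree between left value `a` and right value `b`. -/
def lrAdj (i a b : ℕ) : Prop :=
  (a = 2*i ∧ b = 2*i) ∨ (a = 2*i+1 ∧ b = 2*i) ∨ (a = 2*i+1 ∧ b = 2*i+1) ∨
  (a ≠ 2*i ∧ a ≠ 2*i+1 ∧ b = 2*i + a % 2) ∨
  (b ≠ 2*i ∧ b ≠ 2*i+1 ∧ a = 2*i + (b+1) % 2)

lemma lrAdj_inj {i j a b : ℕ} (hi : lrAdj i a b) (hj : lrAdj j a b) : i = j := by
  unfold lrAdj at hi hj; omega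

/-- The `i`-th spanning tree of the complete bipartite graph. -/
def myT (m₁ m₂ i : ℕ) : (completeBipartiteGraph (Fin m₁) (Fin m₂)).Subgraph where
  verts := Set.univ
  Adj x y :=
    match x, y with
    | .inl a, .inr b => lrAdj i a.val b.val
    | .inr b, .inl a => lrAdj i a.val b.val
    | _, _ => False
  adj_sub := by rintro (a|b) (a'|b') h <;> simp_all
  edge_vert := fun _ => Set.mem_univ _
  symm := ⟨by rintro (a|b) (a'|b') h <;> exact h⟩

lemma myT_adj_lr {m₁ m₂ i : ℕ} {a : Fin m₁} {b : Fin m₂} :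
    (myT m₁ m₂ i).Adj (.inl a) (.inr b) ↔ lrAdj i a.val b.val := Iff.rfl

lemma myT_adj_rl {m₁ m₂ i : ℕ} {a : Fin m₁} {b : Fin m₂} :
    (myT m₁ m₂ i).Adj (.inr b) (.inl a) ↔ lrAdj i a.val b.val := Iff.rfl

lemma myT_not_ll {m₁ m₂ i : ℕ} {a a' : Fin m₁} :
    ¬ (myT m₁ m₂ i).Adj (.inl a) (.inl a') := fun h => h

lemma myT_not_rr {m₁ m₂ i : ℕ} {b b' : Fin m₂} :
    ¬ (myT m₁ m₂ i).Adj (.inr b) (.inr b') := fun h => h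

/-- A vertex with two distinct neighbours in `myT m₁ m₂ i` is a centre. -/
lemma center_of_two {m₁ m₂ i : ℕ} {x y z : Sum (Fin m₁) (Fin m₂)} (hyz : y ≠ z)
    (hy : (myT m₁ m₂ i).Adj x y) (hz : (myT m₁ m₂ i).Adj x z) :
    (∃ a : Fin m₁, x = .inl a ∧ (a.val = 2*i ∨ a.val = 2*i+1)) ∨
    (∃ b : Fin m₂, x = .inr b ∧ (b.val = 2*i ∨ b.val = 2*i+1)) := by
  match x, y, z with
  | .inl a, .inr b, .inr b' =>
    left
    refine ⟨a, rfl, ?_⟩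
    rw [myT_adj_lr] at hy hz
    have hbb' : b.val ≠ b'.val := fun h => hyz (by rw [Fin.ext_iff.2 h])
    unfold lrAdj at hy hz; omega
  | .inr b, .inl a, .inl a' =>
    right
    refine ⟨b, rfl, ?_⟩
    rw [myT_adj_rl] at hy hz
    have haa' : a.val ≠ a'.val := fun h => hyz (by rw [Fin.ext_iff.2 h])
    unfold lrAdj at hy hz; omega
  | .inl _, .inl _, _ => exact absurd hy myT_not_ll
  | .inl _, .inr _, .inl _ => exact absurd hz myT_not_ll
  | .inr _, .inr _, _ => exact absurd hy myT_not_rr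
  | .inr _, .inl _, .inr _ => exact absurd hz myT_not_rr

/-- In a cycle, the base point has two distinct neighbours along cycle edges. -/
lemma cycle_start_two {V : Type*} {H : SimpleGraph V} {u : V} {c : H.Walk u u}
    (hc : c.IsCycle) : ∃ w w', w ≠ w' ∧ s(u, w) ∈ c.edges ∧ s(u, w') ∈ c.edges := by
  cases c with
  | nil => exact absurd rfl hc.ne_nil
  | @cons _ w _ h q =>
    rw [Walk.cons_isCycle_iff] at hc
    have hqnil : ¬ q.Nil := by
      intro hn
      exact H.loopless.irrefl u (hn.eq ▸ h)
    have hrnil : ¬ q.reverse.Nil := by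
      rw [Walk.not_nil_iff_lt_length, Walk.length_reverse]
      rw [Walk.not_nil_iff_lt_length] at hqnil; exact hqnil
    obtain ⟨w', h', r, hqr⟩ := Walk.not_nil_iff.1 hrnil
    have hw' : s(u, w') ∈ q.edges := by
      have : s(u, w') ∈ q.reverse.edges := by rw [hqr]; simp
      rwa [Walk.edges_reverse, List.mem_reverse] at this
    refine ⟨w, w', ?_, by simp, by simp [hw']⟩
    rintro rfl
    exact hc.2 hw'

/-- Every vertex of a cycle has two distinct neighbours along cycle edges. -/
lemma cycle_mem_two {V : Type*} [DecidableEq V] {H : SimpleGraph V} {v u : V} {c : H.Walk v v}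
    (hc : c.IsCycle) (hu : u ∈ c.support) :
    ∃ w w', w ≠ w' ∧ s(u, w) ∈ c.edges ∧ s(u, w') ∈ c.edges := by
  obtain ⟨w, w', hne, h1, h2⟩ := cycle_start_two (hc.rotate hu)
  exact ⟨w, w', hne, (c.rotate_edges (u := u) hu).perm.mem_iff.1 h1,
    (c.rotate_edges (u := u) hu).perm.mem_iff.1 h2⟩

/-- An interior vertex of a path has two distinct neighbours along path edges. -/
lemma path_interior_two {V : Type*} {H : SimpleGraph V} {y v : V} :
    ∀ {x : V} {P : H.Walk x y}, P.IsPath → v ∈ P.support → v ≠ x → v ≠ y →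
      ∃ w w', w ≠ w' ∧ s(v, w) ∈ P.edges ∧ s(v, w') ∈ P.edges := by
  intro x P
  induction P with
  | nil =>
    intro _ hv hvx _
    simp only [Walk.support_nil, List.mem_singleton] at hv
    exact absurd hv hvx
  | @cons x x' _ h P ih =>
    intro hP hv hvx hvy
    rw [Walk.cons_isPath_iff] at hP
    rw [Walk.support_cons, List.mem_cons] at hv
    rcases hv with rfl | hv
    · exact absurd rfl hvx
    by_cases hvx' : v = x'
    · subst hvx'
      have hPnil : ¬ P.Nil := fun hn => hvy hn.eq
      obtain ⟨z, h₂, P₂, hP₂⟩ := Walk.not_nil_iff.1 hPnil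
      refine ⟨x, z, ?_, ?_, ?_⟩
      · intro hxz
        apply hP.2
        rw [hP₂, hxz]
        simp
      · rw [Walk.edges_cons]
        exact List.mem_cons.2 (Or.inl (Sym2.eq_swap))
      · rw [Walk.edges_cons, hP₂]
        simp
    · obtain ⟨w, w', hne, h1, h2⟩ := ih hP.1 hv hvx' hvy
      exact ⟨w, w', hne, by simp [h1], by simp [h2]⟩

lemma verts_myT {m₁ m₂ i : ℕ} : (myT m₁ m₂ i).verts = Set.univ := rfl

/-- connectivity of each tree -/
lemma myT_connected {m₁ m₂ i : ℕ} (hm1 : 2*i+1 < m₁) (hm2 : 2*i+1 < m₂) :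
    (myT m₁ m₂ i).coe.Connected := by
  set T := myT m₁ m₂ i with hT
  let c₀ : T.verts := ⟨.inr ⟨2*i, by omega⟩, Set.mem_univ _⟩
  let l1 : T.verts := ⟨.inl ⟨2*i+1, hm1⟩, Set.mem_univ _⟩
  have adjLC : ∀ (a : Fin m₁) (b : Fin m₂), lrAdj i a.val b.val →
      T.coe.Adj ⟨.inl a, Set.mem_univ _⟩ ⟨.inr b, Set.mem_univ _⟩ := by
    intro a b hab
    exact hab
  have hRL1 : T.coe.Reachable l1 c₀ := by
    refine (adjLC _ _ ?_).reachable
    show lrAdj i (2*i+1) (2*i)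
    unfold lrAdj; omega
  have key : ∀ x : T.verts, T.coe.Reachable x c₀ := by
    rintro ⟨(a | b), -⟩
    · by_cases ha1 : a.val = 2*i+1
      · refine Reachable.trans ?_ hRL1
        have : (⟨.inl a, Set.mem_univ _⟩ : T.verts) = l1 := by
          apply Subtype.ext
          simp only
          congr 1
          exact Fin.ext ha1
        rw [this]
      · by_cases ha2 : a.val % 2 = 1
        · -- a odd, not 2i+1 : attach to R(2i+1), then to L(2i+1), then c₀
          have h2 : 2*i+1 < m₂ := hm2
          refine ((adjLC a ⟨2*i+1, h2⟩ ?_).reachable).trans ?_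
          · show lrAdj i a.val (2*i+1); unfold lrAdj; omega
          · refine ((adjLC ⟨2*i+1, hm1⟩ ⟨2*i+1, h2⟩ ?_).reachable.symm).trans hRL1
            show lrAdj i (2*i+1) (2*i+1); unfold lrAdj; omega
        · -- a even (incl. a = 2i): attach directly to R(2i) = c₀
          refine (adjLC a ⟨2*i, by omega⟩ ?_).reachable
          show lrAdj i a.val (2*i); unfold lrAdj; omega
    · -- right vertex b : attach to a centre on the left
      by_cases hb2 : b.val % 2 = 0
      · -- even b (incl. 2i) : adjacent to L(2i+1) unless b = 2i ; but 2i even: spine2 works too!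
        refine ((adjLC ⟨2*i+1, hm1⟩ b ?_).reachable.symm).trans hRL1
        show lrAdj i (2*i+1) b.val; unfold lrAdj; omega
      · -- odd b : adjacent to L(2i) which is adjacent to c₀ ; if b = 2i+1 use spine3 via L(2i+1)
        by_cases hb1 : b.val = 2*i+1
        · refine ((adjLC ⟨2*i+1, hm1⟩ b ?_).reachable.symm).trans hRL1
          show lrAdj i (2*i+1) b.val; unfold lrAdj; omega
        · refine ((adjLC ⟨2*i, by omega⟩ b ?_).reachable.symm).trans ?_
          · show lrAdj i (2*i) b.val; unfold lrAdj; omega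
          · refine (adjLC ⟨2*i, by omega⟩ ⟨2*i, by omega⟩ ?_).reachable
            show lrAdj i (2*i) (2*i); unfold lrAdj; omega
  rw [connected_iff]
  exact ⟨fun x y => (key x).trans (key y).symm, ⟨c₀⟩⟩

lemma myT_acyclic {m₁ m₂ i : ℕ} : (myT m₁ m₂ i).coe.IsAcyclic := by
  set T := myT m₁ m₂ i with hT
  intro v c hc
  -- every support vertex has two distinct T-neighbours among support vertices
  have nbrs : ∀ u ∈ c.support, ∃ w w', w ∈ c.support ∧ w' ∈ c.support ∧
      (w : T.verts).val ≠ (w' : T.verts).val ∧ T.Adj u.val w.val ∧ T.Adj u.val w'.val := by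
    intro u hu
    obtain ⟨w, w', hne, h1, h2⟩ := cycle_mem_two hc hu
    refine ⟨w, w', c.snd_mem_support_of_mem_edges h1, c.snd_mem_support_of_mem_edges h2,
      Subtype.coe_injective.ne hne, ?_, ?_⟩
    · exact c.adj_of_mem_edges h1
    · exact c.adj_of_mem_edges h2
  -- hence every support vertex is a centre of the tree
  have hctr : ∀ u ∈ c.support,
      (∃ a : Fin m₁, (u : T.verts).val = .inl a ∧ (a.val = 2*i ∨ a.val = 2*i+1)) ∨
      (∃ b : Fin m₂, (u : T.verts).val = .inr b ∧ (b.val = 2*i ∨ b.val = 2*i+1)) := by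
    intro u hu
    obtain ⟨w, w', _, _, hne, h1, h2⟩ := nbrs u hu
    exact center_of_two hne h1 h2
  -- the vertex `L(2i)` is not on the cycle
  have hA : ∀ u ∈ c.support, ∀ a : Fin m₁, (u : T.verts).val = .inl a → a.val ≠ 2*i := by
    rintro u hu a hua ha
    obtain ⟨w, w', hw, hw', hne, h1, h2⟩ := nbrs u hu
    rw [hua] at h1 h2
    obtain ⟨b, hb, hbc⟩ : ∃ b : Fin m₂, w.val = .inr b ∧ (b.val = 2*i ∨ b.val = 2*i+1) := by
      rcases hctr w hw with ⟨a', ha', _⟩ | hb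
      · rw [ha'] at h1; exact absurd h1 myT_not_ll
      · exact hb
    obtain ⟨b', hb', hbc'⟩ : ∃ b' : Fin m₂, w'.val = .inr b' ∧ (b'.val = 2*i ∨ b'.val = 2*i+1) := by
      rcases hctr w' hw' with ⟨a', ha', _⟩ | hb
      · rw [ha'] at h2; exact absurd h2 myT_not_ll
      · exact hb
    rw [hb] at h1; rw [hb'] at h2
    rw [myT_adj_lr] at h1 h2
    apply hne
    rw [hb, hb']
    congr 1
    apply Fin.ext
    unfold lrAdj at h1 h2
    omega
  -- the vertex `R(2i+1)` is not on the cycle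
  have hB : ∀ u ∈ c.support, ∀ b : Fin m₂, (u : T.verts).val = .inr b → b.val ≠ 2*i+1 := by
    rintro u hu b hub hb0
    obtain ⟨w, w', hw, hw', hne, h1, h2⟩ := nbrs u hu
    rw [hub] at h1 h2
    obtain ⟨a, ha, hac⟩ : ∃ a : Fin m₁, w.val = .inl a ∧ (a.val = 2*i ∨ a.val = 2*i+1) := by
      rcases hctr w hw with ha | ⟨b', hb', _⟩
      · exact ha
      · rw [hb'] at h1; exact absurd h1 myT_not_rr
    obtain ⟨a', ha', hac'⟩ : ∃ a' : Fin m₁, w'.val = .inl a' ∧ (a'.val = 2*i ∨ a'.val = 2*i+1) := by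
      rcases hctr w' hw' with ha | ⟨b', hb', _⟩
      · exact ha
      · rw [hb'] at h2; exact absurd h2 myT_not_rr
    rw [ha] at h1; rw [ha'] at h2
    rw [myT_adj_rl] at h1 h2
    apply hne
    rw [ha, ha']
    congr 1
    apply Fin.ext
    unfold lrAdj at h1 h2
    omega
  -- now look at the base point of the cycle
  have hv : v ∈ c.support := c.start_mem_support
  obtain ⟨w, w', hw, hw', hne, h1, h2⟩ := nbrs v hv
  rcases hctr v hv with ⟨a, ha, hac⟩ | ⟨b, hb, hbc⟩
  · have ha1 : a.val = 2*i+1 := by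
      rcases hac with h | h
      · exact absurd h (hA v hv a ha)
      · exact h
    -- v = L(2i+1); its neighbours on the cycle are right centres ≠ R(2i+1), i.e. both R(2i)
    rw [ha] at h1 h2
    obtain ⟨b, hbw, hbc⟩ : ∃ b : Fin m₂, w.val = .inr b ∧ (b.val = 2*i ∨ b.val = 2*i+1) := by
      rcases hctr w hw with ⟨a', ha', _⟩ | h
      · rw [ha'] at h1; exact absurd h1 myT_not_ll
      · exact h
    obtain ⟨b', hbw', hbc'⟩ : ∃ b' : Fin m₂, w'.val = .inr b' ∧ (b'.val = 2*i ∨ b'.val = 2*i+1) := by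
      rcases hctr w' hw' with ⟨a', ha', _⟩ | h
      · rw [ha'] at h2; exact absurd h2 myT_not_ll
      · exact h
    have hb1 : b.val ≠ 2*i+1 := hB w hw b hbw
    have hb2 : b'.val ≠ 2*i+1 := hB w' hw' b' hbw'
    apply hne
    rw [hbw, hbw']
    congr 1
    apply Fin.ext
    omega
  · have hb1 : b.val = 2*i := by
      rcases hbc with h | h
      · exact h
      · exact absurd h (hB v hv b hb)
    -- v = R(2i); its neighbours are left centres ≠ L(2i), i.e. both L(2i+1)
    rw [hb] at h1 h2
    obtain ⟨a, haw, hac⟩ : ∃ a : Fin m₁, w.val = .inl a ∧ (a.val = 2*i ∨ a.val = 2*i+1) := by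
      rcases hctr w hw with h | ⟨b', hb', _⟩
      · exact h
      · rw [hb'] at h1; exact absurd h1 myT_not_rr
    obtain ⟨a', haw', hac'⟩ : ∃ a' : Fin m₁, w'.val = .inl a' ∧ (a'.val = 2*i ∨ a'.val = 2*i+1) := by
      rcases hctr w' hw' with h | ⟨b', hb', _⟩
      · exact h
      · rw [hb'] at h2; exact absurd h2 myT_not_rr
    have ha1 : a.val ≠ 2*i := hA w hw a haw
    have ha2 : a'.val ≠ 2*i := hA w' hw' a' haw'
    apply hne
    rw [haw, haw']
    congr 1
    apply Fin.ext
    omega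

theorem stmt_8 (m₁ m₂ : ℕ) (h1 : 2 ≤ m₁) (h12 : m₁ ≤ m₂) :
    ∃ Ts : Fin (m₁ / 2) → (completeBipartiteGraph (Fin m₁) (Fin m₂)).Subgraph,
      (∀ i, (Ts i).verts = Set.univ ∧ (Ts i).coe.IsTree) ∧
      (completeBipartiteGraph (Fin m₁) (Fin m₂)).CompletelyIndependent Set.univ Ts := by
  refine ⟨fun i => myT m₁ m₂ i.val, ?_, ?_⟩
  · intro i
    have hi : 2 * i.val + 1 < m₁ := by have := i.isLt; omega
    exact ⟨rfl, ⟨myT_connected hi (by omega), myT_acyclic⟩⟩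
  · intro p q hpq
    have hpq' : p.val ≠ q.val := fun h => hpq (Fin.ext h)
    refine ⟨?_, by simp [verts_myT], ?_⟩
    · apply Set.eq_empty_iff_forall_notMem.2
      intro e he
      induction e using Sym2.ind with
      | _ x y =>
        obtain ⟨h1, h2⟩ := he
        have h1' : (myT m₁ m₂ p.val).Adj x y := h1
        have h2' : (myT m₁ m₂ q.val).Adj x y := h2
        clear h1 h2
        match x, y with
        | .inl a, .inr b => exact hpq' (lrAdj_inj h1' h2')
        | .inr b, .inl a => exact hpq' (lrAdj_inj h1' h2')
        | .inl _, .inl _ => exact h1'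
        | .inr _, .inr _ => exact h1' 
    · intro x₁ _ x₂ _ hx P Q hP hQ hPin hQin v hvP hvQ
      by_contra hvn
      push_neg at hvn
      obtain ⟨hv1, hv2⟩ := hvn
      obtain ⟨w, w', hne, e1, e2⟩ := path_interior_two hP hvP hv1 hv2
      obtain ⟨z, z', hne2, f1, f2⟩ := path_interior_two hQ hvQ hv1 hv2
      have a1 : (myT m₁ m₂ p.val).Adj v w := Subgraph.mem_edgeSet.1 (hPin _ e1)
      have a2 : (myT m₁ m₂ p.val).Adj v w' := Subgraph.mem_edgeSet.1 (hPin _ e2)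
      have b1 : (myT m₁ m₂ q.val).Adj v z := Subgraph.mem_edgeSet.1 (hQin _ f1)
      have b2 : (myT m₁ m₂ q.val).Adj v z' := Subgraph.mem_edgeSet.1 (hQin _ f2)
      have cp := center_of_two hne a1 a2
      have cq := center_of_two hne2 b1 b2
      rcases cp with ⟨a, ha, hac⟩ | ⟨b, hb, hbc⟩ <;>
        rcases cq with ⟨a', ha', hac'⟩ | ⟨b', hb', hbc'⟩
      · rw [ha] at ha'
        have : a = a' := Sum.inl.inj ha'
        subst this
        omega
      · rw [ha] at hb'
        exact Sum.inl_ne_inr hb'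
      · rw [hb] at ha'
        exact Sum.inr_ne_inl ha'
      · rw [hb] at hb'
        have : b = b' := Sum.inr.inj hb'
        subst this
        omega
end
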